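/- arXiv:1706.01454 — 10 statements merged into one kernel-verified Lean document; each statement's English description precedes it below -/
import Mathlib

section
/- For all integers m ≥ 0, n ≥ 1, and 1 ≤ s ≤ n, the alternating sum ∑_{t≥0} (-1)^t C(m, nt+s-1) equals (1/n) ∑_{j=1}^{n} (μ^{2j-1} + 1)^m · μ^{(2j-1)(1-s)}, where μ = exp(πi/n). -/
/-!
Expanding `(μ ^ (2j-1) + 1) ^ m` by the binomial theorem and exchanging the sums, the right-hand
side becomes `∑ₖ C(m, k) cₖ` with `cₖ = (1/n) ∑ⱼ μ ^ ((2j-1)(k-s+1))`. As `μ ^ 2` is a primitive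
`n`-th root of unity and `μ ^ n = -1`, this root-of-unity filter gives `cₖ = (-1) ^ t` when
`k = n t + s - 1` and `cₖ = 0` otherwise.
-/

open Finset Complex

theorem sum_Icc_pow_eq_zero_of_pow_eq_one {K : Type*} [DivisionRing K] {x : K} {n : ℕ}
    (hxn : x ^ n = 1) (hx : x ≠ 1) : ∑ j ∈ Icc 1 n, x ^ j = 0 := by
  rw [← Ico_add_one_right_eq_Icc, geom_sum_Ico hx (by omega), pow_succ, hxn, one_mul, pow_one,
    sub_self, zero_div]

theorem add_one_pow_mul_zpow {K : Type*} [Field K] {x : K} (hx : x ≠ 0) (m : ℕ) (c : ℤ) :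
    (x + 1) ^ m * x ^ c = ∑ k ∈ range (m + 1), (m.choose k : K) * x ^ ((k : ℤ) + c) := by
  rw [add_pow, sum_mul]
  refine sum_congr rfl fun k _ => ?_
  rw [one_pow, mul_one, zpow_add₀ hx, zpow_natCast]
  ring

theorem pow_two_mul_sub_one_add_one_pow_mul_zpow {K : Type*} [Field K] {x : K} (hx : x ≠ 0)
    {j : ℕ} (hj : 1 ≤ j) (m : ℕ) (c : ℤ) :
    (x ^ (2 * j - 1) + 1) ^ m * x ^ ((2 * (j : ℤ) - 1) * c) =
      ∑ k ∈ range (m + 1), (m.choose k : K) * x ^ ((2 * (j : ℤ) - 1) * ((k : ℤ) + c)) := by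
  have hcast : x ^ (2 * j - 1) = x ^ (2 * (j : ℤ) - 1) := by
    rw [← zpow_natCast, Nat.cast_sub (by omega)]
    push_cast
    rfl
  simp only [hcast, zpow_mul, add_one_pow_mul_zpow (zpow_ne_zero _ hx)]

theorem Finset.sum_range_mul_ite_mod_eq {M : Type*} [AddCommMonoid M] {n a : ℕ} (ha : a < n)
    (g : ℕ → M) (N : ℕ) :
    ∑ k ∈ range (n * N), (if k % n = a then g k else 0) = ∑ t ∈ range N, g (n * t + a) := by
  induction N with
  | zero => simp
  | succ N ih =>
    rw [mul_add_one, sum_range_add, ih, sum_range_succ]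
    congr 1
    have hmod : ∀ i ∈ range n, (n * N + i) % n = i := fun i hi => by
      rw [Nat.mul_comm]
      exact Nat.mul_add_mod_of_lt (mem_range.mp hi)
    rw [sum_congr rfl fun i hi => by rw [hmod i hi], sum_ite_eq', if_pos (mem_range.mpr ha)]

theorem sum_range_neg_one_pow_mul_choose_mul_add {R : Type*} [CommRing R] {n a : ℕ} (ha : a < n)
    (m : ℕ) :
    ∑ t ∈ range (m + 1), (-1 : R) ^ t * m.choose (n * t + a) =
      ∑ k ∈ range (m + 1), if k % n = a then (-1 : R) ^ (k / n) * m.choose k else 0 := by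
  calc ∑ t ∈ range (m + 1), (-1 : R) ^ t * m.choose (n * t + a)
      = ∑ k ∈ range (n * (m + 1)), if k % n = a then (-1 : R) ^ (k / n) * m.choose k else 0 := by
        rw [sum_range_mul_ite_mod_eq ha]
        refine sum_congr rfl fun t _ => ?_
        rw [Nat.mul_add_div (by omega), Nat.div_eq_of_lt ha, add_zero]
    _ = _ := by
        refine (sum_subset (range_subset_range.mpr (by nlinarith)) fun k _ hkm => ?_).symm
        rw [Nat.choose_eq_zero_of_lt (by simpa using hkm)]
        simp

namespace IsPrimitiveRoot

variable {K : Type*} [Field K] {μ : K} {n : ℕ}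

theorem pow_eq_neg_one (hμ : IsPrimitiveRoot μ (2 * n)) (hn : n ≠ 0) : μ ^ n = -1 :=
  (hμ.pow (by omega) (mul_comm 2 n)).eq_neg_one_of_two_right

theorem sum_Icc_zpow_odd_mul_eq_zero (hμ : IsPrimitiveRoot μ (2 * n)) {r : ℤ}
    (hr : ¬ (n : ℤ) ∣ r) : ∑ j ∈ Icc 1 n, μ ^ ((2 * (j : ℤ) - 1) * r) = 0 := by
  rcases Nat.eq_zero_or_pos n with rfl | hn
  · simp
  have hμ0 : μ ≠ 0 := hμ.ne_zero (by omega)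
  have hx1 : μ ^ (2 * r) ≠ 1 := by
    rw [Ne, hμ.zpow_eq_one_iff_dvd, Nat.cast_mul, Nat.cast_two]
    exact fun h => hr ((Int.mul_dvd_mul_iff_left two_ne_zero).mp h)
  have hxn : (μ ^ (2 * r)) ^ n = 1 := by
    rw [← zpow_natCast, ← zpow_mul, (hμ.zpow_eq_one_iff_dvd _).mpr]
    exact ⟨r, by push_cast; ring⟩
  calc ∑ j ∈ Icc 1 n, μ ^ ((2 * (j : ℤ) - 1) * r)
      = ∑ j ∈ Icc 1 n, μ ^ (-r) * (μ ^ (2 * r)) ^ j := by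
        refine sum_congr rfl fun j _ => ?_
        rw [← zpow_natCast, ← zpow_mul, ← zpow_add₀ hμ0]
        ring_nf
    _ = 0 := by rw [← mul_sum, sum_Icc_pow_eq_zero_of_pow_eq_one hxn hx1, mul_zero]

theorem sum_Icc_zpow_odd_mul_natCast_mul (hμ : IsPrimitiveRoot μ (2 * n)) (hn : n ≠ 0) (q : ℤ) :
    ∑ j ∈ Icc 1 n, μ ^ ((2 * (j : ℤ) - 1) * (n * q)) = n * (-1) ^ q := by
  have hterm : ∀ j ∈ Icc 1 n, μ ^ ((2 * (j : ℤ) - 1) * (n * q)) = (-1) ^ q := fun j _ => by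
    have hodd : Odd (2 * (j : ℤ) - 1) := ⟨j - 1, by ring⟩
    rw [show (2 * (j : ℤ) - 1) * (n * q) = n * (2 * (j : ℤ) - 1) * q by ring, zpow_mul, zpow_mul,
      zpow_natCast, hμ.pow_eq_neg_one hn, hodd.neg_one_zpow]
  rw [sum_congr rfl hterm, sum_const, Nat.card_Icc, add_tsub_cancel_right, nsmul_eq_mul]

theorem sum_Icc_zpow_odd_mul_sub {a : ℕ} (hμ : IsPrimitiveRoot μ (2 * n)) (ha : a < n) (k : ℕ) :
    ∑ j ∈ Icc 1 n, μ ^ ((2 * (j : ℤ) - 1) * ((k : ℤ) - a)) =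
      if k % n = a then n * (-1 : K) ^ (k / n) else 0 := by
  split_ifs with hk
  · have hdiv : (k : ℤ) - a = n * (k / n : ℕ) := by
      have := Nat.div_add_mod k n
      rw [hk] at this
      omega
    rw [hdiv, hμ.sum_Icc_zpow_odd_mul_natCast_mul (by omega), zpow_natCast]
  · refine hμ.sum_Icc_zpow_odd_mul_eq_zero fun hdvd => hk ?_
    have : a ≡ k [MOD n] := Nat.modEq_iff_dvd.mpr hdvd
    rw [← this, Nat.mod_eq_of_lt ha]

end IsPrimitiveRoot

theorem Complex.isPrimitiveRoot_exp_pi_mul_I_div {n : ℕ} (hn : n ≠ 0) :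
    IsPrimitiveRoot (exp (Real.pi * I / n)) (2 * n) := by
  convert Complex.isPrimitiveRoot_exp (2 * n) (by omega) using 2
  push_cast
  field_simp

theorem trigonometric_order_n_binom_sum (m n s : ℕ) (hn : 1 ≤ n) (hs1 : 1 ≤ s) (hsn : s ≤ n) :
    (∑ t ∈ Finset.range (m + 1), ((-1 : ℂ) ^ t * (Nat.choose m (n * t + s - 1) : ℂ))) =
      (1 / n) * ∑ j ∈ Finset.Icc 1 n,
        (Complex.exp (Real.pi * Complex.I / n) ^ (2 * j - 1) + 1) ^ m *
          Complex.exp (Real.pi * Complex.I / n) ^ ((2 * (j : ℤ) - 1) * (1 - (s : ℤ))) := by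
  obtain ⟨a, rfl⟩ := Nat.exists_eq_add_of_le' hs1
  have hμ := Complex.isPrimitiveRoot_exp_pi_mul_I_div (n := n) (by omega)
  set μ := exp (Real.pi * I / n)
  simp only [← add_assoc, Nat.add_sub_cancel]
  calc ∑ t ∈ range (m + 1), (-1 : ℂ) ^ t * m.choose (n * t + a)
      = ∑ k ∈ range (m + 1), if k % n = a then (-1 : ℂ) ^ (k / n) * m.choose k else 0 :=
        sum_range_neg_one_pow_mul_choose_mul_add (by omega) m
    _ = ∑ k ∈ range (m + 1),
          (m.choose k : ℂ) * (1 / n * ∑ j ∈ Icc 1 n, μ ^ ((2 * (j : ℤ) - 1) * ((k : ℤ) - a))) := by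
        refine sum_congr rfl fun k _ => ?_
        rw [hμ.sum_Icc_zpow_odd_mul_sub (by omega)]
        have hn0 : (n : ℂ) ≠ 0 := by exact_mod_cast (show n ≠ 0 by omega)
        split_ifs
        · field_simp
        · simp
    _ = _ := by
        rw [sum_congr rfl fun j hj => pow_two_mul_sub_one_add_one_pow_mul_zpow
          (hμ.ne_zero (by omega)) (mem_Icc.mp hj).1 m _, sum_comm, mul_sum]
        refine sum_congr rfl fun k _ => ?_
        rw [mul_left_comm, mul_sum,
          show (k : ℤ) + (1 - ((a + 1 : ℕ) : ℤ)) = k - a by push_cast; ring]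
end

section
/- Define H_s(m,n) = ∑_{t≥0} C(m, nt+s-1) for 1 ≤ s ≤ n, and extend by H_{-(s-1)}(m,n) = H_{n-s+1}(m,n) for 1 ≤ s ≤ n (so indices are read modulo n). Then for all m, s ≥ 0 and 1 ≤ i ≤ n: H_i(m+s, n) = ∑_{j=1}^{n} H_j(s,n) · H_{i-j+1}(m,n). -/
open Finset

/-- Difference hyperbolic function of order `n`, extended periodically in the index `s`
(period `n`), so that `H_{-(s-1)} = H_{n-s+1}`. For `1 ≤ s ≤ n` it equals
`∑_{t≥0} C(m, nt+s-1)`. -/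
def HfunExt (n m : ℕ) (s : ℤ) : ℤ :=
  ∑ t ∈ Finset.range (m + 1), (Nat.choose m (n * t + ((s - 1).emod n).toNat) : ℤ)

/-!
`H_i(m, n)` is the coefficient of `x ^ (i - 1)` in `(1 + x) ^ m` computed in the group ring
`ℤ[ℤ/n]`, i.e. with `x ^ n = 1`; this also explains the periodicity in `i`. The addition formula
is the comparison of coefficients in `(1 + x) ^ (m + s) = (1 + x) ^ s * (1 + x) ^ m`, the
coefficient of a product in a group ring being a convolution over `ℤ/n`.
-/

namespace AddMonoidAlgebra

theorem coeff_mul_eq_sum {R G : Type*} [Semiring R] [AddCommGroup G] [Fintype G]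
    (x y : AddMonoidAlgebra R G) (g : G) :
    (x * y).coeff g = ∑ h, x.coeff h * y.coeff (g - h) := by
  rw [coeff_mul_apply_left, Finsupp.sum_fintype _ _ fun _ ↦ zero_mul _]
  simp only [neg_add_eq_sub]

theorem coeff_one_add_single_pow {R G : Type*} [CommSemiring R] [AddCommMonoid G] [DecidableEq G]
    (g x : G) (m : ℕ) :
    ((1 + single g 1 : AddMonoidAlgebra R G) ^ m).coeff x
      = ∑ k ∈ range (m + 1) with k • g = x, (m.choose k : R) := by
  rw [add_comm, add_pow, coeff_sum, Finsupp.finsetSum_apply, Finset.sum_filter]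
  refine Finset.sum_congr rfl fun k _ ↦ ?_
  rw [single_pow, one_pow, one_pow, mul_one, natCast_def, single_mul_single, one_mul,
    add_zero, coeff_single, Finsupp.single_apply]

end AddMonoidAlgebra

theorem sum_mul_add_eq_sum_filter_mod {M : Type*} [AddCommMonoid M] (f : ℕ → M) {n r m : ℕ}
    (hn : 0 < n) (hr : r < n) (hf : ∀ k, m < k → f k = 0) :
    ∑ t ∈ range (m + 1), f (n * t + r) = ∑ k ∈ range (m + 1) with k % n = r, f k := by
  refine sum_bij_ne_zero (fun t _ _ ↦ n * t + r) ?_ ?_ ?_ fun _ _ _ ↦ rfl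
  · intro t _ ht
    have : n * t + r ≤ m := not_lt.mp fun h ↦ ht (hf _ h)
    simpa [Nat.mul_add_mod, Nat.mod_eq_of_lt hr, Nat.lt_succ_iff] using this
  · intro t₁ _ _ t₂ _ _ h
    simpa [hn.ne'] using h
  · intro k hk hfk
    simp only [mem_filter, mem_range] at hk
    refine ⟨k / n, ?_, ?_, ?_⟩
    · simp only [mem_range]
      exact Nat.lt_succ_of_le ((Nat.div_le_self k n).trans (by omega))
    · rw [← hk.2, Nat.div_add_mod]; exact hfk
    · rw [← hk.2, Nat.div_add_mod]

open AddMonoidAlgebra in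
theorem HfunExt_eq_coeff (n : ℕ) [NeZero n] (m : ℕ) (s : ℤ) :
    HfunExt n m s =
      ((1 + single 1 1 : AddMonoidAlgebra ℤ (ZMod n)) ^ m).coeff ((s - 1 : ℤ) : ZMod n) := by
  have hn : 0 < n := Nat.pos_of_neZero n
  set r := ((s - 1) % n).toNat
  have hr_int : (r : ℤ) = (s - 1) % n := Int.toNat_of_nonneg (Int.emod_nonneg _ (by omega))
  have hr : r < n := by have := Int.emod_lt_of_pos (s - 1) (by omega : (0 : ℤ) < n); omega
  have hcast : ((s - 1 : ℤ) : ZMod n) = r := by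
    rw [← ZMod.intCast_mod, ← hr_int, Int.cast_natCast]
  rw [coeff_one_add_single_pow, hcast, HfunExt]
  simp only [nsmul_eq_mul, mul_one, ZMod.natCast_eq_natCast_iff', Nat.mod_eq_of_lt hr]
  exact sum_mul_add_eq_sum_filter_mod (fun k ↦ (m.choose k : ℤ)) hn hr fun k hk ↦ by
    simp [Nat.choose_eq_zero_of_lt hk]

theorem sum_Icc_one_eq_sum_zmod {M : Type*} [AddCommMonoid M] (n : ℕ) [NeZero n]
    (f : ZMod n → M) :
    ∑ j ∈ Icc (1 : ℤ) n, f ((j - 1 : ℤ) : ZMod n) = ∑ a, f a := by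
  refine sum_nbij' (fun j ↦ ((j - 1 : ℤ) : ZMod n)) (fun a ↦ (a.val : ℤ) + 1)
    (by simp) ?_ ?_ ?_ fun _ _ ↦ rfl
  · intro a _
    simp only [mem_Icc]
    have := a.val_lt
    omega
  · intro j hj
    simp only [mem_Icc] at hj
    rw [ZMod.val_intCast, Int.emod_eq_of_lt (by omega) (by omega)]
    ring
  · intro a _
    simp

open AddMonoidAlgebra in
theorem Hfun_addition_general (n : ℕ) (hn : 1 ≤ n) (m s : ℕ) (i : ℤ) :
    HfunExt n (m + s) i = ∑ j ∈ Finset.Icc (1 : ℤ) n, HfunExt n s j * HfunExt n m (i - j + 1) := by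
  have : NeZero n := ⟨by omega⟩
  set P : AddMonoidAlgebra ℤ (ZMod n) := 1 + single 1 1
  have hshift (j : ℤ) :
      ((i - j + 1 - 1 : ℤ) : ZMod n) = ((i - 1 : ℤ) : ZMod n) - ((j - 1 : ℤ) : ZMod n) := by
    push_cast; ring
  simp only [HfunExt_eq_coeff, hshift]
  rw [Nat.add_comm m s, pow_add, coeff_mul_eq_sum]
  exact (sum_Icc_one_eq_sum_zmod n fun a ↦
    (P ^ s).coeff a * (P ^ m).coeff (((i - 1 : ℤ) : ZMod n) - a)).symm

theorem Hfun_addition (n : ℕ) (hn : 1 ≤ n) (m s : ℕ) (i : ℤ) (hi1 : 1 ≤ i) (hin : i ≤ n) :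
    HfunExt n (m + s) i = ∑ j ∈ Finset.Icc (1 : ℤ) n, HfunExt n s j * HfunExt n m (i - j + 1) :=
  Hfun_addition_general n hn m s i
end

section
/- Define K_s(m,n) = ∑_{t≥0} (-1)^t C(m, nt+s-1) for 1 ≤ s ≤ n, and extend by K_{-(s-1)}(m,n) = -K_{n-s+1}(m,n) for 1 ≤ s ≤ n. Then for all m, s ≥ 0 and 1 ≤ i ≤ n: K_i(m+s, n) = ∑_{j=1}^{n} K_j(s,n) · K_{i-j+1}(m,n). -/
open Finset

/-- Difference trigonometric function of order `n`, extended anti-periodically in the index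
`s`, so that `K_{-(s-1)} = -K_{n-s+1}`. For `1 ≤ s ≤ n` it equals
`∑_{t≥0} (-1)^t C(m, nt+s-1)`. -/
def KfunExt (n m : ℕ) (s : ℤ) : ℤ :=
  (-1 : ℤ) ^ (((s - 1).ediv n).natAbs) *
    ∑ t ∈ Finset.range (m + 1), (-1 : ℤ) ^ t * (Nat.choose m (n * t + ((s - 1).emod n).toNat) : ℤ)

def Ksg (q : ℤ) : ℤ := (-1 : ℤ) ^ q.natAbs

def Kcore (n r m : ℕ) : ℤ := ∑ t ∈ Finset.range (m + 1), (-1 : ℤ) ^ t * (Nat.choose m (n * t + r) : ℤ)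

lemma Kfun_eq (n m : ℕ) (s : ℤ) :
    KfunExt n m s = Ksg ((s - 1) / n) * Kcore n (((s - 1) % n).toNat) m := rfl

lemma Ksg_add_one (q : ℤ) : Ksg (q + 1) = - Ksg q := by
  unfold Ksg
  rcases Int.even_or_odd q with h | h
  · rw [(Int.natAbs_even.2 h).neg_one_pow, (Int.natAbs_odd.2 (h.add_one)).neg_one_pow]
  · rw [(Int.natAbs_odd.2 h).neg_one_pow, (Int.natAbs_even.2 (h.add_one)).neg_one_pow]
    ring

lemma Ksg_sub_one (q : ℤ) : Ksg (q - 1) = - Ksg q := by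
  have h := Ksg_add_one (q - 1)
  have h2 : q - 1 + 1 = q := by ring
  rw [h2] at h
  linarith

lemma decomp_ediv (n : ℕ) (q : ℤ) (r : ℕ) (hr : r < n) : (q * n + r) / n = q := by
  have hn0 : (n : ℤ) ≠ 0 := by exact_mod_cast (by omega : n ≠ 0)
  rw [add_comm, Int.add_mul_ediv_right _ _ hn0,
    Int.ediv_eq_zero_of_lt (by positivity) (by exact_mod_cast hr)]
  ring

lemma decomp_emod (n : ℕ) (q : ℤ) (r : ℕ) (hr : r < n) : (q * n + r) % n = r := by
  rw [add_comm, Int.add_mul_emod_self_right, Int.emod_eq_of_lt (by positivity) (by exact_mod_cast hr)]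

lemma Kfun_red (n m : ℕ) (q : ℤ) (r : ℕ) (hr : r < n) :
    KfunExt n m (q * n + r + 1) = Ksg q * Kcore n r m := by
  rw [Kfun_eq]
  have h1 : (q * (n:ℤ) + r + 1 - 1) = q * n + r := by ring
  rw [h1, decomp_ediv n q r hr, decomp_emod n q r hr, Int.toNat_natCast]

lemma Kcore_rec (n : ℕ) (hn : 1 ≤ n) (r m : ℕ) (hr : r < n) :
    Kcore n r (m + 1) =
      Kcore n r m + (if r = 0 then -Kcore n (n - 1) m else Kcore n (r - 1) m) := by
  rcases Nat.eq_zero_or_pos r with rfl | hr1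
  · rw [if_pos rfl]
    set A : ℤ := ∑ t ∈ Finset.range (m+1), (-1:ℤ)^(t+1) * (m.choose (n*t + n) : ℤ) with hA
    set B : ℤ := ∑ t ∈ Finset.range (m+1), (-1:ℤ)^(t+1) * (m.choose (n*t + (n-1)) : ℤ) with hB
    have key : ∀ t : ℕ, ((m+1).choose (n*(t+1) + 0) : ℤ)
        = (m.choose (n*t + n) : ℤ) + (m.choose (n*t + (n-1)) : ℤ) := by
      intro t
      have h1 : n*(t+1) + 0 = (n*t + (n-1)) + 1 := by rw [Nat.mul_succ]; omega
      rw [h1, Nat.choose_succ_succ' m (n*t + (n-1))]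
      have h2 : n*t + (n-1) + 1 = n*t + n := by omega
      rw [h2]
      push_cast
      ring
    have step1 : Kcore n 0 (m+1) = A + B + 1 := by
      unfold Kcore
      rw [Finset.sum_range_succ' (fun t => (-1:ℤ)^t * ((m+1).choose (n*t + 0) : ℤ)) (m+1)]
      have h0 : ((-1:ℤ)^0 * ((m+1).choose (n*0 + 0) : ℤ)) = 1 := by norm_num
      rw [h0, hA, hB, ← Finset.sum_add_distrib]
      congr 1
      apply Finset.sum_congr rfl
      intro t _
      rw [key t]
      ring
    have step2 : Kcore n 0 m = A + 1 := by
      unfold Kcore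
      rw [Finset.sum_range_succ' (fun t => (-1:ℤ)^t * (m.choose (n*t + 0) : ℤ)) m]
      have h0 : ((-1:ℤ)^0 * (m.choose (n*0 + 0) : ℤ)) = 1 := by norm_num
      rw [h0, hA]
      congr 1
      rw [Finset.sum_range_succ (fun t => (-1:ℤ)^(t+1) * (m.choose (n*t + n) : ℤ)) m]
      have hz : m.choose (n*m + n) = 0 := by
        apply Nat.choose_eq_zero_of_lt
        have : m ≤ n * m := Nat.le_mul_of_pos_left m hn
        omega
      rw [hz]
      push_cast
      rw [mul_zero, add_zero]
      apply Finset.sum_congr rfl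
      intro t _
      have h1 : n*(t+1) + 0 = n*t + n := by rw [Nat.mul_succ]; omega
      rw [h1]
    have step3 : Kcore n (n-1) m = -B := by
      unfold Kcore
      rw [hB, ← Finset.sum_neg_distrib]
      apply Finset.sum_congr rfl
      intro t _
      ring
    rw [step1, step2, step3]
    ring
  · rw [if_neg (by omega)]
    unfold Kcore
    have key : ∀ t : ℕ, ((m+1).choose (n*t + r) : ℤ)
        = (m.choose (n*t + r) : ℤ) + (m.choose (n*t + (r-1)) : ℤ) := by
      intro t
      have h1 : n*t + r = (n*t + (r-1)) + 1 := by omega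
      rw [h1, Nat.choose_succ_succ' m (n*t + (r-1))]
      have h2 : n*t + (r-1) + 1 = n*t + r := by omega
      rw [h2]
      push_cast
      ring
    have lhs1 : (∑ t ∈ Finset.range (m+1+1), (-1:ℤ)^t * ((m+1).choose (n*t + r) : ℤ))
        = (∑ t ∈ Finset.range (m+1+1), (-1:ℤ)^t * (m.choose (n*t + r) : ℤ))
          + (∑ t ∈ Finset.range (m+1+1), (-1:ℤ)^t * (m.choose (n*t + (r-1)) : ℤ)) := by
      rw [← Finset.sum_add_distrib]
      apply Finset.sum_congr rfl
      intro t _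
      rw [key t]; ring
    have drop : ∀ r' : ℕ, (∑ t ∈ Finset.range (m+1+1), (-1:ℤ)^t * (m.choose (n*t + r') : ℤ))
        = ∑ t ∈ Finset.range (m+1), (-1:ℤ)^t * (m.choose (n*t + r') : ℤ) := by
      intro r'
      rw [Finset.sum_range_succ]
      have hz : m.choose (n*(m+1) + r') = 0 := by
        apply Nat.choose_eq_zero_of_lt
        have : m + 1 ≤ n * (m+1) := Nat.le_mul_of_pos_left (m+1) hn
        omega
      rw [hz]
      push_cast
      rw [mul_zero, add_zero]
    rw [lhs1, drop r, drop (r-1)]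

lemma Kfun_rec (n : ℕ) (hn : 1 ≤ n) (m : ℕ) (i : ℤ) :
    KfunExt n (m + 1) i = KfunExt n m i + KfunExt n m (i - 1) := by
  have hn0 : (0:ℤ) < n := by exact_mod_cast hn
  set q : ℤ := (i - 1) / n with hq
  set r : ℕ := ((i - 1) % n).toNat with hrdef
  have hlt : (i - 1) % n < n := Int.emod_lt_of_pos (i-1) hn0
  have hge : 0 ≤ (i - 1) % n := Int.emod_nonneg (i-1) (by omega)
  have hrlt : r < n := by omega
  have hi : i = q * n + r + 1 := by
    have h := Int.mul_ediv_add_emod (i-1) n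
    rw [mul_comm] at h
    rw [← hq] at h
    omega
  rcases Nat.eq_zero_or_pos r with hr0 | hr1
  · rw [hi, Kfun_red n (m+1) q r hrlt, Kfun_red n m q r hrlt]
    have h2 : (q * (n:ℤ) + r + 1 - 1) = (q - 1) * n + ((n-1:ℕ):ℤ) + 1 := by
      have : ((n-1:ℕ):ℤ) = (n:ℤ) - 1 := by omega
      rw [this, hr0]
      push_cast
      ring
    rw [h2, Kfun_red n m (q-1) (n-1) (by omega), Ksg_sub_one]
    rw [hr0, Kcore_rec n hn 0 m (by omega), if_pos rfl]
    ring
  · rw [hi, Kfun_red n (m+1) q r hrlt, Kfun_red n m q r hrlt]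
    have h2 : (q * (n:ℤ) + r + 1 - 1) = q * n + ((r-1:ℕ):ℤ) + 1 := by
      have : ((r-1:ℕ):ℤ) = (r:ℤ) - 1 := by omega
      rw [this]
      ring
    rw [h2, Kfun_red n m q (r-1) (by omega)]
    rw [Kcore_rec n hn r m hrlt, if_neg (by omega)]
    ring

lemma Kcore_zero (n r : ℕ) : Kcore n r 0 = if r = 0 then 1 else 0 := by
  unfold Kcore
  rcases Nat.eq_zero_or_pos r with rfl | h
  · simp
  · rw [if_neg (by omega), Finset.sum_range_one]
    have : (0).choose (n * 0 + r) = 0 := Nat.choose_eq_zero_of_lt (by omega)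
    rw [this]
    norm_num

lemma main_aux (n : ℕ) (hn : 1 ≤ n) (s : ℕ) :
    ∀ (m : ℕ) (i : ℤ), KfunExt n (m + s) i
      = ∑ j ∈ Finset.Icc (1 : ℤ) n, KfunExt n s j * KfunExt n m (i - j + 1) := by
  intro m
  induction m with
  | zero =>
    intro i
    have hn0 : (0:ℤ) < n := by exact_mod_cast hn
    set q : ℤ := (i - 1) / n with hq
    set r : ℕ := ((i - 1) % n).toNat with hrdef
    have hlt : (i - 1) % n < n := Int.emod_lt_of_pos (i-1) hn0
    have hge : 0 ≤ (i - 1) % n := Int.emod_nonneg (i-1) (by omega)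
    have hrlt : r < n := by omega
    have hi : i = q * n + r + 1 := by
      have h := Int.mul_ediv_add_emod (i-1) n
      rw [mul_comm] at h
      rw [← hq] at h
      omega
    set j0 : ℤ := (r : ℤ) + 1 with hj0
    have hj0mem : j0 ∈ Finset.Icc (1:ℤ) n := by
      rw [Finset.mem_Icc]
      omega
    rw [Finset.sum_eq_single_of_mem j0 hj0mem ?_]
    · have h1 : i - j0 + 1 = q * (n:ℤ) + ((0:ℕ):ℤ) + 1 := by
        rw [hi, hj0]; push_cast; ring
      have h2 : KfunExt n s j0 = Ksg 0 * Kcore n r s := by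
        have h : j0 = 0 * (n:ℤ) + r + 1 := by rw [hj0]; ring
        rw [h, Kfun_red n s 0 r hrlt]
      have h3 : KfunExt n (0 + s) i = Ksg q * Kcore n r s := by
        rw [Nat.zero_add, hi, Kfun_red n s q r hrlt]
      rw [h3, h1, Kfun_red n 0 q 0 hn, h2, Kcore_zero]
      have hs0 : Ksg 0 = 1 := by simp [Ksg]
      rw [hs0, if_pos rfl]
      ring
    · intro j hj hne
      rw [Finset.mem_Icc] at hj
      have hzero : KfunExt n 0 (i - j + 1) = 0 := by
        rw [Kfun_eq]
        have harg : i - j + 1 - 1 = i - j := by ring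
        rw [harg, Kcore_zero]
        have hge2 : 0 ≤ (i - j) % n := Int.emod_nonneg (i-j) (by omega)
        have hne0 : ((i - j) % (n:ℤ)).toNat ≠ 0 := by
          intro h0
          have hmod : (i - j) % (n:ℤ) = 0 := by omega
          have hd1 : (n:ℤ) ∣ (i - j) := Int.dvd_of_emod_eq_zero hmod
          have hd2 : (n:ℤ) ∣ (i - j0) := ⟨q, by rw [hi, hj0]; push_cast; ring⟩
          have hd3 : (n:ℤ) ∣ (j0 - j) := by
            have h := dvd_sub hd1 hd2
            have h4 : i - j - (i - j0) = j0 - j := by ring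
            rwa [h4] at h
          have hz : j0 - j = 0 := by
            apply Int.eq_zero_of_abs_lt_dvd hd3
            rw [abs_lt]
            constructor <;> (rw [hj0] <;> push_cast <;> omega)
          exact hne (by omega)
        rw [if_neg hne0, mul_zero]
      rw [hzero, mul_zero]
  | succ m ih =>
    intro i
    have h1 : m + 1 + s = (m + s) + 1 := by omega
    rw [h1, Kfun_rec n hn (m+s) i, ih i, ih (i-1), ← Finset.sum_add_distrib]
    apply Finset.sum_congr rfl
    intro j _
    rw [Kfun_rec n hn m (i - j + 1)]
    have h2 : i - j + 1 - 1 = i - 1 - j + 1 := by ring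
    rw [h2]
    ring

theorem Kfun_addition (n : ℕ) (hn : 1 ≤ n) (m s : ℕ) (i : ℤ) (hi1 : 1 ≤ i) (hin : i ≤ n) :
    KfunExt n (m + s) i = ∑ j ∈ Finset.Icc (1 : ℤ) n, KfunExt n s j * KfunExt n m (i - j + 1) :=
  main_aux n hn s m i
end

section
/- If n is odd and m ≥ 1, then ∑_{i=1}^{n} (-1)^{i-1} K_i(m,n) = 0, where K_i(m,n) = ∑_{t≥0} (-1)^t C(m, nt+i-1). -/
open Finset

theorem Kfun_alternating_sum_eq_zero (n m : ℕ) (hn : 1 ≤ n) (hno : Odd n) (hm : 1 ≤ m) :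
    (∑ i ∈ Finset.Icc 1 n, (-1 : ℤ) ^ (i - 1) *
      ∑ t ∈ Finset.range (m + 1), (-1 : ℤ) ^ t * (Nat.choose m (n * t + i - 1) : ℤ)) = 0 := by
  have key : (∑ i ∈ Finset.Icc 1 n, (-1 : ℤ) ^ (i - 1) *
      ∑ t ∈ Finset.range (m + 1), (-1 : ℤ) ^ t * (Nat.choose m (n * t + i - 1) : ℤ))
      = ∑ k ∈ Finset.range (n * (m + 1)), (-1 : ℤ) ^ k * (Nat.choose m k : ℤ) := by
    simp_rw [Finset.mul_sum]
    rw [← Finset.sum_product']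
    refine Finset.sum_nbij' (fun p => n * p.2 + p.1 - 1) (fun k => (k % n + 1, k / n))
      ?_ ?_ ?_ ?_ ?_
    · rintro ⟨i, t⟩ hp
      simp only [Finset.mem_product, Finset.mem_Icc, Finset.mem_range] at hp ⊢
      obtain ⟨⟨h1, h2⟩, h3⟩ := hp
      have : n * t + n ≤ n * (m + 1) := by nlinarith
      omega
    · rintro k hk
      simp only [Finset.mem_range] at hk
      simp only [Finset.mem_product, Finset.mem_Icc, Finset.mem_range]
      have := Nat.mod_lt k (show 0 < n by omega)
      refine ⟨⟨by omega, by omega⟩, ?_⟩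
      exact Nat.div_lt_of_lt_mul (by omega)
    · rintro ⟨i, t⟩ hp
      simp only [Finset.mem_product, Finset.mem_Icc, Finset.mem_range] at hp
      obtain ⟨⟨h1, h2⟩, h3⟩ := hp
      have hk : n * t + i - 1 = n * t + (i - 1) := by omega
      have hlt : i - 1 < n := by omega
      dsimp only
      rw [hk]
      have hmod : (n * t + (i - 1)) % n = i - 1 := by
        rw [Nat.mul_add_mod, Nat.mod_eq_of_lt hlt]
      have hdiv : (n * t + (i - 1)) / n = t := by
        rw [add_comm, Nat.add_mul_div_left _ _ (show 0 < n by omega), Nat.div_eq_of_lt hlt]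
        omega
      simp [hmod, hdiv]
      omega
    · rintro k hk
      simp only [Finset.mem_range] at hk
      dsimp only
      have := Nat.mod_lt k (show 0 < n by omega)
      have := Nat.div_add_mod k n
      omega
    · rintro ⟨i, t⟩ hp
      simp only [Finset.mem_product, Finset.mem_Icc, Finset.mem_range] at hp
      obtain ⟨⟨h1, h2⟩, h3⟩ := hp
      have hk : n * t + i - 1 = n * t + (i - 1) := by omega
      dsimp only
      rw [hk, pow_add, pow_mul, Odd.neg_one_pow hno]
      ring
  rw [key]
  have hle : m + 1 ≤ n * (m + 1) := Nat.le_mul_of_pos_left _ (by omega)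
  rw [← Finset.sum_range_add_sum_Ico _ hle]
  rw [Int.alternating_sum_range_choose_of_ne (by omega)]
  rw [zero_add]
  apply Finset.sum_eq_zero
  intro k hk
  simp only [Finset.mem_Ico] at hk
  rw [Nat.choose_eq_zero_of_lt (by omega)]
  simp
end

section
/- If n is odd and m ≥ 1, then the n×n circulant matrix whose first row is ((-1)^{i-1} K_i(m,n))_{i=1..n} has determinant 0, where K_i(m,n) = ∑_{t≥0} (-1)^t C(m, nt+i-1). -/
open Finset Matrix

lemma Kfun_sum_reindex (n m : ℕ) (hn : 1 ≤ n) :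
    ∀ g : ℕ → ℤ, ∑ c ∈ Finset.range n, ∑ t ∈ Finset.range (m + 1), g (n * t + c)
      = ∑ j ∈ Finset.range (n * (m + 1)), g j := by
  intro g
  rw [← Finset.sum_product']
  apply Finset.sum_nbij' (i := fun p => n * p.2 + p.1) (j := fun j => (j % n, j / n))
  · rintro ⟨c, t⟩ hp
    simp only [Finset.mem_product, Finset.mem_range] at hp ⊢
    calc n * t + c < n * t + n := by omega
    _ ≤ n * (m + 1) := by nlinarith [hp.1, hp.2]
  · intro j hj
    simp only [Finset.mem_product, Finset.mem_range] at hj ⊢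
    refine ⟨Nat.mod_lt _ (by omega), ?_⟩
    rw [Nat.div_lt_iff_lt_mul (by omega : 0 < n), mul_comm]
    exact hj
  · rintro ⟨c, t⟩ hp
    simp only [Finset.mem_product, Finset.mem_range] at hp
    have h1 : (n * t + c) % n = c := by
      rw [add_comm, Nat.add_mul_mod_self_left, Nat.mod_eq_of_lt hp.1]
    have h2 : (n * t + c) / n = t := by
      rw [add_comm, Nat.add_mul_div_left _ _ (by omega : 0 < n),
        Nat.div_eq_of_lt hp.1, zero_add]
    simp [h1, h2]
  · intro j hj
    simp [Nat.div_add_mod, Nat.mul_div_cancel']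
  · rintro ⟨c, t⟩ hp; rfl

set_option maxHeartbeats 1000000 in
theorem Kfun_circulant_det_eq_zero (n m : ℕ) (hn : 1 ≤ n) (hno : Odd n) (hm : 1 ≤ m) :
    Matrix.det (Matrix.of fun r c : Fin n =>
      (-1 : ℤ) ^ ((((c : ℤ) - (r : ℤ)).emod n).toNat) *
        ∑ t ∈ Finset.range (m + 1),
          (-1 : ℤ) ^ t * (Nat.choose m (n * t + (((c : ℤ) - (r : ℤ)).emod n).toNat) : ℤ)) = 0 := by
  haveI : NeZero n := ⟨by omega⟩
  have hn' : (0:ℤ) < n := by exact_mod_cast hn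
  set M : Matrix (Fin n) (Fin n) ℤ := Matrix.of fun r c : Fin n =>
      (-1 : ℤ) ^ ((((c : ℤ) - (r : ℤ)).emod n).toNat) *
        ∑ t ∈ Finset.range (m + 1),
          (-1 : ℤ) ^ t * (Nat.choose m (n * t + (((c : ℤ) - (r : ℤ)).emod n).toNat) : ℤ)
    with hM
  rw [← Matrix.exists_mulVec_eq_zero_iff]
  refine ⟨fun _ => 1, ?_, ?_⟩
  · intro h
    have := congr_fun h ⟨0, hn⟩
    simp at this
  set f : ℕ → ℤ := fun i => (-1 : ℤ) ^ i *
      ∑ t ∈ Finset.range (m + 1), (-1 : ℤ) ^ t * (Nat.choose m (n * t + i) : ℤ) with hf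
  have key : ∀ r c : Fin n, ((((r + c : Fin n) : ℤ) - (r : ℤ)).emod n).toNat = (c : ℕ) := by
    intro r c
    have hv : ((r + c : Fin n) : ℤ) = ((r : ℤ) + (c : ℤ)) % n := by
      rw [Fin.val_add]; push_cast; ring
    rw [hv]
    show ((((r:ℤ) + (c:ℤ)) % (n:ℤ) - (r:ℤ)) % (n:ℤ)).toNat = (c : ℕ)
    have h2 : (((r:ℤ) + (c:ℤ)) % (n:ℤ) - (r:ℤ)) % (n:ℤ) = (c:ℤ) % n := by
      conv_lhs => rw [Int.sub_emod, Int.emod_emod_of_dvd _ dvd_rfl, ← Int.sub_emod,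
        add_sub_cancel_left]
    rw [h2, Int.emod_eq_of_lt (by positivity) (by exact_mod_cast c.isLt)]
    simp
  have hrow : ∀ r c : Fin n, M r (r + c) = f (c : ℕ) := by
    intro r c
    simp only [hM, Matrix.of_apply, key, hf]
  funext r
  show (M *ᵥ fun _ => (1:ℤ)) r = 0
  have expand : (M *ᵥ fun _ => (1:ℤ)) r = ∑ c : Fin n, M r c := by
    simp [Matrix.mulVec, dotProduct]
  rw [expand]
  calc ∑ c : Fin n, M r c = ∑ c : Fin n, f (c : ℕ) := by
        rw [← Equiv.sum_comp (Equiv.addLeft r) (fun c => M r c)]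
        refine Finset.sum_congr rfl fun c _ => ?_
        rw [Equiv.coe_addLeft]
        exact hrow r c
    _ = ∑ c ∈ Finset.range n, f c := Fin.sum_univ_eq_sum_range f n
    _ = ∑ c ∈ Finset.range n, ∑ t ∈ Finset.range (m + 1),
          ((-1 : ℤ) ^ (n * t + c) * (Nat.choose m (n * t + c) : ℤ)) := by
        refine Finset.sum_congr rfl fun c _ => ?_
        show (-1 : ℤ) ^ c * ∑ t ∈ Finset.range (m + 1),
          (-1 : ℤ) ^ t * (Nat.choose m (n * t + c) : ℤ) = _
        rw [Finset.mul_sum]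
        refine Finset.sum_congr rfl fun t _ => ?_
        rw [pow_add, pow_mul, hno.neg_one_pow, ← mul_assoc, mul_comm ((-1:ℤ)^c)]
    _ = ∑ j ∈ Finset.range (n * (m + 1)), ((-1 : ℤ) ^ j * (Nat.choose m j : ℤ)) :=
        Kfun_sum_reindex n m hn (fun j => (-1:ℤ)^j * (Nat.choose m j : ℤ))
    _ = ∑ j ∈ Finset.range (m + 1), ((-1 : ℤ) ^ j * (Nat.choose m j : ℤ)) := by
        refine (Finset.sum_subset ?_ ?_).symm
        · exact Finset.range_subset_range.2 (by nlinarith)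
        · intro j hj hj2
          simp only [Finset.mem_range, not_lt] at hj2
          rw [Nat.choose_eq_zero_of_lt (by omega)]
          simp
    _ = 0 := Int.alternating_sum_range_choose_of_ne (by omega)
end

section
/- For all integers m ≥ 0 and s ≥ 0, with H_i(m) = ∑_{t≥0} C(m, 3t+i-1) for i=1,2,3: H_1(m+s) = H_1(s)H_1(m) + H_2(s)H_3(m) + H_3(s)H_2(m). -/
open Finset

/-- `H_i(m) = ∑_{t≥0} C(m, 3t+i-1)`, the difference hyperbolic functions of order 3. -/
def H3 (m i : ℕ) : ℤ :=
  ∑ t ∈ Finset.range (m + 1), (Nat.choose m (3 * t + i - 1) : ℤ)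

lemma H3_ext (m i N : ℕ) (hi : 1 ≤ i) (hN : m + 1 ≤ N) :
    H3 m i = ∑ t ∈ Finset.range N, (Nat.choose m (3 * t + i - 1) : ℤ) := by
  rw [H3]
  apply Finset.sum_subset (Finset.range_subset_range.2 hN)
  intro x _ hx
  simp only [Finset.mem_range, not_lt] at hx
  have : m < 3 * x + i - 1 := by omega
  simp [Nat.choose_eq_zero_of_lt this]

lemma H3_rec2 (m : ℕ) : H3 (m + 1) 2 = H3 m 2 + H3 m 1 := by
  rw [H3, H3_ext m 1 (m + 2) (by norm_num) (by omega),
    H3_ext m 2 (m + 2) (by norm_num) (by omega), ← Finset.sum_add_distrib]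
  apply Finset.sum_congr rfl
  intro t _
  have h1 : 3 * t + 2 - 1 = 3 * t + 1 := by omega
  have h2 : 3 * t + 1 - 1 = 3 * t := by omega
  rw [h1, h2, Nat.choose_succ_succ]
  push_cast
  ring

lemma H3_rec3 (m : ℕ) : H3 (m + 1) 3 = H3 m 3 + H3 m 2 := by
  rw [H3, H3_ext m 2 (m + 2) (by norm_num) (by omega),
    H3_ext m 3 (m + 2) (by norm_num) (by omega), ← Finset.sum_add_distrib]
  apply Finset.sum_congr rfl
  intro t _
  have h1 : 3 * t + 3 - 1 = 3 * t + 1 + 1 := by omega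
  have h2 : 3 * t + 2 - 1 = 3 * t + 1 := by omega
  rw [h1, h2, Nat.choose_succ_succ]
  push_cast
  ring

lemma H3_rec1 (m : ℕ) : H3 (m + 1) 1 = H3 m 1 + H3 m 3 := by
  have e1 : H3 (m + 1) 1 =
      (∑ t ∈ Finset.range (m + 1),
        ((Nat.choose m (3 * t + 2) : ℤ) + (Nat.choose m (3 * t + 3) : ℤ))) + 1 := by
    rw [H3, Finset.sum_range_succ']
    simp only [Nat.add_sub_cancel, Nat.mul_zero, Nat.choose_zero_right, Nat.cast_one]
    have key : ∀ t ∈ Finset.range (m + 1), ((m + 1).choose (3 * (t + 1)) : ℤ)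
        = (Nat.choose m (3 * t + 2) : ℤ) + (Nat.choose m (3 * t + 3) : ℤ) := by
      intro t _
      have h3 : 3 * (t + 1) = 3 * t + 2 + 1 := by omega
      rw [h3, Nat.choose_succ_succ]
      push_cast
      ring
    rw [Finset.sum_congr rfl key]
  have e2 : H3 m 1 = (∑ t ∈ Finset.range (m + 1), (Nat.choose m (3 * t + 3) : ℤ)) + 1 := by
    rw [H3_ext m 1 (m + 2) (by norm_num) (by omega), Finset.sum_range_succ']
    simp only [Nat.add_sub_cancel, Nat.mul_zero, Nat.choose_zero_right, Nat.cast_one]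
    have key : ∀ t ∈ Finset.range (m + 1), (Nat.choose m (3 * (t + 1)) : ℤ)
        = (Nat.choose m (3 * t + 3) : ℤ) := by
      intro t _
      have : 3 * (t + 1) = 3 * t + 3 := by omega
      rw [this]
    rw [Finset.sum_congr rfl key]
  have e3 : H3 m 3 = ∑ t ∈ Finset.range (m + 1), (Nat.choose m (3 * t + 2) : ℤ) := by
    rw [H3]
    apply Finset.sum_congr rfl
    intro t _
    have : 3 * t + 3 - 1 = 3 * t + 2 := by omega
    rw [this]
  rw [e1, e2, e3, Finset.sum_add_distrib]
  ring

lemma H3_zero1 : H3 0 1 = 1 := by simp [H3]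
lemma H3_zero2 : H3 0 2 = 0 := by simp [H3]
lemma H3_zero3 : H3 0 3 = 0 := by simp [H3]

lemma H3_add_all (m s : ℕ) :
    H3 (m + s) 1 = H3 s 1 * H3 m 1 + H3 s 2 * H3 m 3 + H3 s 3 * H3 m 2 ∧
    H3 (m + s) 2 = H3 s 1 * H3 m 2 + H3 s 2 * H3 m 1 + H3 s 3 * H3 m 3 ∧
    H3 (m + s) 3 = H3 s 1 * H3 m 3 + H3 s 2 * H3 m 2 + H3 s 3 * H3 m 1 := by
  induction s with
  | zero => simp [H3_zero1, H3_zero2, H3_zero3]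
  | succ n ih =>
    obtain ⟨ih1, ih2, ih3⟩ := ih
    have hm : m + (n + 1) = (m + n) + 1 := by omega
    rw [hm, H3_rec1 (m + n), H3_rec2 (m + n), H3_rec3 (m + n), H3_rec1 n, H3_rec2 n,
      H3_rec3 n, ih1, ih2, ih3]
    refine ⟨by ring, by ring, by ring⟩

theorem H3_addition (m s : ℕ) :
    H3 (m + s) 1 = H3 s 1 * H3 m 1 + H3 s 2 * H3 m 3 + H3 s 3 * H3 m 2 := by
  exact (H3_add_all m s).1
end

section
/- For all integers m ≥ 0 and s ≥ 0, with K_i(m) = ∑_{t≥0} (-1)^t C(m, 3t+i-1) for i=1,2,3: K_1(m+s) = K_1(s)K_1(m) - K_2(s)K_3(m) - K_3(s)K_2(m). -/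
open Finset

/-- `K_i(m) = ∑_{t≥0} (-1)^t C(m, 3t+i-1)`, the difference trigonometric functions of order 3. -/
def K3 (m i : ℕ) : ℤ :=
  ∑ t ∈ Finset.range (m + 1), (-1 : ℤ) ^ t * (Nat.choose m (3 * t + i - 1) : ℤ)

lemma K3_def1 (m : ℕ) : K3 m 1 = ∑ t ∈ Finset.range (m + 1), (-1 : ℤ) ^ t * (Nat.choose m (3 * t) : ℤ) := by
  simp [K3]

lemma K3_def2 (m : ℕ) : K3 m 2 = ∑ t ∈ Finset.range (m + 1), (-1 : ℤ) ^ t * (Nat.choose m (3 * t + 1) : ℤ) := by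
  simp [K3]

lemma K3_def3 (m : ℕ) : K3 m 3 = ∑ t ∈ Finset.range (m + 1), (-1 : ℤ) ^ t * (Nat.choose m (3 * t + 2) : ℤ) := by
  simp [K3]

lemma choose_big (m t : ℕ) (k : ℕ) (h : m < 3 * (m + 1) + k) : Nat.choose m (3 * (m+1) + k) = 0 :=
  Nat.choose_eq_zero_of_lt h

lemma rec2 (m : ℕ) : K3 (m + 1) 2 = K3 m 2 + K3 m 1 := by
  rw [K3_def2, K3_def2, K3_def1]
  have h : ∀ t, (Nat.choose (m+1) (3*t+1) : ℤ) = Nat.choose m (3*t) + Nat.choose m (3*t+1) := by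
    intro t
    rw [Nat.choose_succ_succ]
    push_cast
    ring
  rw [Finset.sum_range_succ]
  have h1 : Nat.choose (m+1) (3*(m+1)+1) = 0 := Nat.choose_eq_zero_of_lt (by omega)
  rw [h1]
  simp only [h]
  rw [Finset.sum_congr rfl (fun t _ => by ring :
    ∀ t ∈ Finset.range (m+1), (-1:ℤ)^t * ((Nat.choose m (3*t) : ℤ) + Nat.choose m (3*t+1))
      = (-1:ℤ)^t * Nat.choose m (3*t+1) + (-1:ℤ)^t * Nat.choose m (3*t)),
    Finset.sum_add_distrib]
  push_cast
  ring

lemma rec3 (m : ℕ) : K3 (m + 1) 3 = K3 m 3 + K3 m 2 := by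
  rw [K3_def3, K3_def3, K3_def2]
  have h : ∀ t, (Nat.choose (m+1) (3*t+2) : ℤ) = Nat.choose m (3*t+1) + Nat.choose m (3*t+2) := by
    intro t
    rw [show 3*t+2 = (3*t+1)+1 by ring, Nat.choose_succ_succ]
    push_cast
    ring
  rw [Finset.sum_range_succ]
  have h1 : Nat.choose (m+1) (3*(m+1)+2) = 0 := Nat.choose_eq_zero_of_lt (by omega)
  rw [h1]
  simp only [h]
  rw [Finset.sum_congr rfl (fun t _ => by ring :
    ∀ t ∈ Finset.range (m+1), (-1:ℤ)^t * ((Nat.choose m (3*t+1) : ℤ) + Nat.choose m (3*t+2))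
      = (-1:ℤ)^t * Nat.choose m (3*t+2) + (-1:ℤ)^t * Nat.choose m (3*t+1)),
    Finset.sum_add_distrib]
  push_cast
  ring

lemma rec1 (m : ℕ) : K3 (m + 1) 1 = K3 m 1 - K3 m 3 := by
  rw [K3_def1, K3_def1, K3_def3]
  rw [Finset.sum_range_succ']
  simp only [Nat.mul_zero, Nat.choose_zero_right]
  have h : ∀ t, (Nat.choose (m+1) (3*(t+1)) : ℤ) = Nat.choose m (3*t+2) + Nat.choose m (3*t+3) := by
    intro t
    rw [show 3*(t+1) = (3*t+2)+1 by ring, Nat.choose_succ_succ]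
    push_cast
    ring
  simp only [h]
  have key : ∑ t ∈ Finset.range (m+1), (-1:ℤ)^t * (Nat.choose m (3*t+3) : ℤ)
      = 1 - ∑ t ∈ Finset.range (m+1), (-1:ℤ)^t * (Nat.choose m (3*t) : ℤ) := by
    have := Finset.sum_range_succ' (fun t => (-1:ℤ)^t * (Nat.choose m (3*t) : ℤ)) (m+1)
    have h2 : Nat.choose m (3*(m+1)) = 0 := Nat.choose_eq_zero_of_lt (by omega)
    rw [Finset.sum_range_succ, h2] at this
    simp only [Nat.mul_zero, Nat.choose_zero_right, Nat.cast_zero, mul_zero, add_zero,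
      Nat.cast_one, pow_zero, mul_one] at this
    have h3 : ∀ t, (-1:ℤ)^(t+1) * (Nat.choose m (3*(t+1)) : ℤ)
        = -((-1:ℤ)^t * (Nat.choose m (3*t+3) : ℤ)) := by
      intro t
      rw [show 3*(t+1) = 3*t+3 by ring, pow_succ]
      ring
    rw [Finset.sum_congr rfl (fun t _ => h3 t), Finset.sum_neg_distrib] at this
    linarith [this]
  have expand : ∑ t ∈ Finset.range (m+1), (-1:ℤ)^(t+1) * ((Nat.choose m (3*t+2) : ℤ) + Nat.choose m (3*t+3))
      = -(∑ t ∈ Finset.range (m+1), (-1:ℤ)^t * (Nat.choose m (3*t+2) : ℤ))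
        - ∑ t ∈ Finset.range (m+1), (-1:ℤ)^t * (Nat.choose m (3*t+3) : ℤ) := by
    rw [Finset.sum_congr rfl (fun t _ => by rw [pow_succ]; ring :
      ∀ t ∈ Finset.range (m+1), (-1:ℤ)^(t+1) * ((Nat.choose m (3*t+2) : ℤ) + Nat.choose m (3*t+3))
        = -((-1:ℤ)^t * (Nat.choose m (3*t+2) : ℤ)) + -((-1:ℤ)^t * (Nat.choose m (3*t+3) : ℤ))),
      Finset.sum_add_distrib, Finset.sum_neg_distrib, Finset.sum_neg_distrib]
    ring
  rw [expand, key]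
  push_cast
  ring

lemma K3_add_all (m s : ℕ) :
    K3 (m + s) 1 = K3 s 1 * K3 m 1 - K3 s 2 * K3 m 3 - K3 s 3 * K3 m 2 ∧
    K3 (m + s) 2 = K3 s 1 * K3 m 2 + K3 s 2 * K3 m 1 - K3 s 3 * K3 m 3 ∧
    K3 (m + s) 3 = K3 s 1 * K3 m 3 + K3 s 2 * K3 m 2 + K3 s 3 * K3 m 1 := by
  induction s with
  | zero =>
    have h1 : K3 0 1 = 1 := by decide
    have h2 : K3 0 2 = 0 := by decide
    have h3 : K3 0 3 = 0 := by decide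
    simp [h1, h2, h3]
  | succ n ih =>
    obtain ⟨ih1, ih2, ih3⟩ := ih
    have hm : m + (n + 1) = (m + n) + 1 := by ring
    rw [hm, rec1, rec2, rec3, rec1, rec2, rec3, ih1, ih2, ih3]
    refine ⟨by ring, by ring, by ring⟩

theorem K3_addition (m s : ℕ) :
    K3 (m + s) 1 = K3 s 1 * K3 m 1 - K3 s 2 * K3 m 3 - K3 s 3 * K3 m 2 := by
  exact (K3_add_all m s).1
end

section
/- For all m ≥ 1, ∑_{t≥0} (-1)^t C(m, 5t) = (2/5)(φ+2)^{m/2} (cos(πm/10) + (φ-1)^m cos(3πm/10)), where φ = (1+√5)/2 is the golden ratio. -/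
/-!
Multisection by the fifth roots of `-1`, namely `e^{i(2j+1)π/5}` for `j < 5`: averaging
`(1 + e^{i(2j+1)π/5})^m` over them keeps exactly the terms `(-1)^t C(m, 5t)` of the binomial
expansion. Since `1 + e^{2iθ} = 2 cos θ · e^{iθ}`, the real part of each summand is
`(2 cos θ)^m cos (mθ)` with `θ = (2j+1)π/10`. The root `-1` contributes `0^m = 0`, the others
pair up under `θ ↦ π - θ`, and `2 cos (π/5) = φ` turns `2 cos (π/10)` into `√(φ+2)` and
`2 cos (3π/10)` into `√(φ+2) (φ-1)`.
-/

open Finset Real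

theorem IsPrimitiveRoot.sum_range_pow_pow {R : Type*} [CommRing R] [NoZeroDivisors R] {ω : R}
    {n : ℕ} (hω : IsPrimitiveRoot ω n) (k : ℕ) :
    ∑ j ∈ range n, (ω ^ k) ^ j = if n ∣ k then (n : R) else 0 := by
  split_ifs with hk
  · simp [(hω.pow_eq_one_iff_dvd k).2 hk]
  · have hne : ω ^ k - 1 ≠ 0 := sub_ne_zero.2 (mt (hω.pow_eq_one_iff_dvd k).1 hk)
    have hgeom := mul_geom_sum (ω ^ k) n
    rw [← pow_right_comm, hω.pow_eq_one, one_pow, sub_self] at hgeom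
    exact (mul_eq_zero.1 hgeom).resolve_left hne

theorem sum_range_pow_mul_choose_eq_sum_filter_dvd {R : Type*} [CommRing R] {n : ℕ} (hn : 0 < n)
    (c : R) (m : ℕ) : ∑ t ∈ range (m + 1), c ^ (n * t) * (m.choose (n * t) : R) =
      ∑ k ∈ range (m + 1) with n ∣ k, c ^ k * (m.choose k : R) := by
  calc _ = ∑ k ∈ (range (m + 1)).map ⟨(n * ·), mul_right_injective₀ hn.ne'⟩,
        c ^ k * (m.choose k : R) := (sum_map _ _ _).symm
    _ = _ := by
      refine (sum_subset (fun k hk => ?_) fun k hk hk' => ?_).symm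
      · obtain ⟨hk, t, rfl⟩ := mem_filter.1 hk
        exact mem_map.2 ⟨t, mem_range.2 (by nlinarith [mem_range.1 hk]), rfl⟩
      · obtain ⟨t, -, rfl⟩ := mem_map.1 hk
        have hlt : m < n * t := by simpa using hk'
        simp [Nat.choose_eq_zero_of_lt hlt]

theorem IsPrimitiveRoot.sum_one_add_mul_pow_pow {R : Type*} [CommRing R] [NoZeroDivisors R]
    {ω : R} {n : ℕ} (hω : IsPrimitiveRoot ω n) (hn : 0 < n) (c : R) (m : ℕ) :
    ∑ j ∈ range n, (1 + c * ω ^ j) ^ m =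
      n * ∑ t ∈ range (m + 1), c ^ (n * t) * (m.choose (n * t) : R) := by
  have hexpand : ∑ j ∈ range n, (1 + c * ω ^ j) ^ m =
      ∑ k ∈ range (m + 1), c ^ k * (m.choose k : R) * ∑ j ∈ range n, (ω ^ k) ^ j := by
    simp_rw [add_comm (1 : R), add_pow, one_pow, mul_one, mul_sum]
    rw [sum_comm]
    refine sum_congr rfl fun k _ => sum_congr rfl fun j _ => ?_
    rw [mul_pow, ← pow_mul, ← pow_mul, mul_comm j k]
    ring
  rw [hexpand, sum_range_pow_mul_choose_eq_sum_filter_dvd hn, sum_filter, mul_sum]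
  refine sum_congr rfl fun k _ => ?_
  rw [hω.sum_range_pow_pow]
  split_ifs <;> ring

theorem re_one_add_cexp_two_mul_I_pow (θ : ℝ) (m : ℕ) :
    ((1 + Complex.exp (↑(2 * θ) * Complex.I)) ^ m).re = (2 * cos θ) ^ m * cos (m * θ) := by
  have hfactor : 1 + Complex.exp (↑(2 * θ) * Complex.I) =
      Complex.exp (θ * Complex.I) * ↑(2 * cos θ) := by
    push_cast
    rw [Complex.two_cos, mul_add, ← Complex.exp_add, ← Complex.exp_add, neg_mul, add_neg_cancel,
      Complex.exp_zero, add_comm, ← two_mul, mul_assoc]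
  rw [hfactor, mul_pow, ← Complex.exp_nat_mul, mul_comm, ← Complex.ofReal_pow,
    Complex.re_ofReal_mul, ← mul_assoc, ← Complex.ofReal_natCast, ← Complex.ofReal_mul,
    Complex.exp_ofReal_mul_I_re]

theorem five_mul_sum_neg_one_pow_mul_choose (m : ℕ) :
    5 * ∑ t ∈ range (m + 1), (-1 : ℝ) ^ t * (m.choose (5 * t) : ℝ) =
      ∑ j ∈ range 5, (2 * cos ((2 * j + 1) * π / 10)) ^ m * cos (m * ((2 * j + 1) * π / 10)) := by
  have hc (t : ℕ) : Complex.exp (π * Complex.I / 5) ^ (5 * t) = ((-1 : ℝ) ^ t : ℝ) := by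
    push_cast
    rw [pow_mul, ← Complex.exp_nat_mul, Nat.cast_ofNat, mul_div_cancel₀ _ (by norm_num),
      Complex.exp_pi_mul_I]
  have hangle (j : ℕ) :
      Complex.exp (π * Complex.I / 5) * Complex.exp (2 * π * Complex.I / (5 : ℕ)) ^ j =
        Complex.exp (↑(2 * ((2 * j + 1) * π / 10)) * Complex.I) := by
    rw [← Complex.exp_nat_mul, ← Complex.exp_add]
    push_cast
    ring_nf
  have hfilter := (Complex.isPrimitiveRoot_exp 5 (by norm_num)).sum_one_add_mul_pow_pow
    (by norm_num) (Complex.exp (π * Complex.I / 5)) m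
  simp_rw [hc, hangle, ← re_one_add_cexp_two_mul_I_pow, ← Complex.re_sum] at hfilter ⊢
  rw [hfilter]
  norm_cast

theorem pow_mul_cos_nat_mul_pi_sub (θ : ℝ) (m : ℕ) :
    (2 * cos (π - θ)) ^ m * cos (m * (π - θ)) = (2 * cos θ) ^ m * cos (m * θ) := by
  have hsign : ((-1 : ℝ) ^ m) ^ 2 = 1 := by rw [← pow_mul, mul_comm, pow_mul]; norm_num
  rw [cos_pi_sub, mul_sub, cos_nat_mul_pi_sub, mul_neg, neg_pow]
  linear_combination (2 * cos θ) ^ m * cos (m * θ) * hsign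

theorem sum_range_five_pow_mul_cos {m : ℕ} (hm : m ≠ 0) :
    ∑ j ∈ range 5, (2 * cos ((2 * j + 1) * π / 10)) ^ m * cos (m * ((2 * j + 1) * π / 10)) =
      2 * ((2 * cos (π / 10)) ^ m * cos (m * (π / 10)) +
        (2 * cos (3 * π / 10)) ^ m * cos (m * (3 * π / 10))) := by
  have hcentre : (2 * cos ((2 * (2 : ℕ) + 1) * π / 10)) ^ m = 0 := by
    rw [show (2 * ((2 : ℕ) : ℝ) + 1) * π / 10 = π / 2 by push_cast; ring, cos_pi_div_two,
      mul_zero, zero_pow hm]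
  rw [sum_range_succ _ 4, sum_range_succ _ 3, sum_range_succ _ 2, sum_range_succ _ 1,
    sum_range_one, hcentre, show (2 * ((0 : ℕ) : ℝ) + 1) * π / 10 = π / 10 by push_cast; ring,
    show (2 * ((1 : ℕ) : ℝ) + 1) * π / 10 = 3 * π / 10 by push_cast; ring,
    show (2 * ((3 : ℕ) : ℝ) + 1) * π / 10 = π - 3 * π / 10 by push_cast; ring,
    show (2 * ((4 : ℕ) : ℝ) + 1) * π / 10 = π - π / 10 by push_cast; ring,
    pow_mul_cos_nat_mul_pi_sub, pow_mul_cos_nat_mul_pi_sub]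
  ring

theorem two_mul_cos_pi_div_five : 2 * cos (π / 5) = goldenRatio := by
  rw [cos_pi_div_five]
  ring

theorem sqrt_goldenRatio_add_two : √(goldenRatio + 2) = 2 * cos (π / 10) := by
  have hsq : goldenRatio + 2 = (2 * cos (π / 10)) ^ 2 := by
    rw [← two_mul_cos_pi_div_five, mul_pow, cos_sq]
    ring_nf
  have hpos : 0 ≤ cos (π / 10) :=
    cos_nonneg_of_mem_Icc ⟨by linarith [pi_pos], by linarith [pi_pos]⟩
  rw [hsq, sqrt_sq (by positivity)]

theorem two_mul_cos_three_pi_div_ten :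
    2 * cos (3 * π / 10) = 2 * cos (π / 10) * (goldenRatio - 1) := by
  rw [← two_mul_cos_pi_div_five, mul_div_assoc, cos_three_mul,
    show π / 5 = 2 * (π / 10) by ring, cos_two_mul]
  ring

theorem K1_order5_closed_form (m : ℕ) (hm : 1 ≤ m) :
    (∑ t ∈ Finset.range (m + 1), (-1 : ℝ) ^ t * (Nat.choose m (5 * t) : ℝ)) =
      (2 / 5) * (Real.sqrt (goldenRatio + 2)) ^ m *
        (Real.cos (Real.pi * m / 10) +
          (goldenRatio - 1) ^ m * Real.cos (3 * Real.pi * m / 10)) := by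
  have h5 := five_mul_sum_neg_one_pow_mul_choose m
  rw [sum_range_five_pow_mul_cos (by omega)] at h5
  rw [sqrt_goldenRatio_add_two, mul_assoc, mul_add, ← mul_assoc _ ((goldenRatio - 1) ^ m),
    ← mul_pow, ← two_mul_cos_three_pi_div_ten, show π * m / 10 = m * (π / 10) by ring,
    show 3 * π * m / 10 = m * (3 * π / 10) by ring]
  linear_combination h5 / 5
end

section
/- For m ≥ 1, the alternating sum ∑_{t≥0} (-1)^t C(m, 5t) equals 0 if and only if m ≡ 5 (mod 10). -/
open Finset

def Tf (r m : ℕ) : ℤ := ∑ t ∈ Finset.range (m+1), (-1)^t * (Nat.choose m (5*t+r) : ℤ)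

lemma step_succ (r m : ℕ) : Tf (r+1) (m+1) = Tf (r+1) m + Tf r m := by
  unfold Tf
  rw [Finset.sum_range_succ]
  have h0 : Nat.choose (m+1) (5*(m+1)+(r+1)) = 0 := Nat.choose_eq_zero_of_lt (by omega)
  rw [h0]
  have h1 : ∀ t ∈ Finset.range (m+1),
      (-1:ℤ)^t * (Nat.choose (m+1) (5*t+(r+1)) : ℤ)
      = (-1)^t * (Nat.choose m (5*t+(r+1)) : ℤ) + (-1)^t * (Nat.choose m (5*t+r) : ℤ) := by
    intro t _
    have h2 : Nat.choose (m+1) ((5*t+r)+1) = Nat.choose m (5*t+r) + Nat.choose m ((5*t+r)+1) :=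
      Nat.choose_succ_succ m (5*t+r)
    have h3 : Nat.choose (m+1) (5*t+(r+1)) = Nat.choose m (5*t+r) + Nat.choose m (5*t+(r+1)) := h2
    rw [h3]; push_cast; ring
  rw [Finset.sum_congr rfl h1, Finset.sum_add_distrib]
  push_cast; ring

lemma key0 (n : ℕ) : (∑ t ∈ Finset.range (n+1), (-1:ℤ)^t * (Nat.choose n (5*t) : ℤ))
    = 1 - ∑ t ∈ Finset.range n, (-1:ℤ)^t * (Nat.choose n (5*t+5) : ℤ) := by
  rw [Finset.sum_range_succ']
  have h1 : ∀ t ∈ Finset.range n,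
      (-1:ℤ)^(t+1) * (Nat.choose n (5*(t+1)) : ℤ) = -((-1)^t * (Nat.choose n (5*t+5) : ℤ)) := by
    intro t _
    have : (5*(t+1)) = 5*t+5 := by ring
    rw [this, pow_succ]; ring
  rw [Finset.sum_congr rfl h1, Finset.sum_neg_distrib]
  simp only [pow_zero, one_mul, Nat.mul_zero, Nat.choose_zero_right, Nat.cast_one]
  ring

lemma step_zero (m : ℕ) : Tf 0 (m+1) = Tf 0 m - Tf 4 m := by
  have l1 : Tf 0 (m+1) = 1 - ∑ t ∈ Finset.range (m+1), (-1:ℤ)^t * (Nat.choose (m+1) (5*t+5) : ℤ) := by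
    unfold Tf
    simpa using key0 (m+1)
  have l2 : ∀ t ∈ Finset.range (m+1),
      (-1:ℤ)^t * (Nat.choose (m+1) (5*t+5) : ℤ)
      = (-1)^t * (Nat.choose m (5*t+4) : ℤ) + (-1)^t * (Nat.choose m (5*t+5) : ℤ) := by
    intro t _
    have h2 : Nat.choose (m+1) ((5*t+4)+1) = Nat.choose m (5*t+4) + Nat.choose m ((5*t+4)+1) :=
      Nat.choose_succ_succ m (5*t+4)
    have h3 : Nat.choose (m+1) (5*t+5) = Nat.choose m (5*t+4) + Nat.choose m (5*t+5) := h2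
    rw [h3]; push_cast; ring
  rw [Finset.sum_congr rfl l2, Finset.sum_add_distrib] at l1
  have l3 : (∑ t ∈ Finset.range (m+1), (-1:ℤ)^t * (Nat.choose m (5*t+5) : ℤ))
      = 1 - Tf 0 m := by
    rw [Finset.sum_range_succ]
    have h0 : Nat.choose m (5*m+5) = 0 := Nat.choose_eq_zero_of_lt (by omega)
    rw [h0]
    have := key0 m
    unfold Tf
    simp only [Nat.add_zero] at *
    rw [this]; push_cast; ring
  rw [l3] at l1
  unfold Tf at *
  linarith [l1]

lemma quintic (m : ℕ) : Tf 0 (m+5) = 5*Tf 0 (m+4) - 10*Tf 0 (m+3) + 10*Tf 0 (m+2) - 5*Tf 0 (m+1) := by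
  have h0_0 : Tf 0 (m+1) = Tf 0 (m) - Tf 4 (m) := step_zero (m)
  have h1_0 : Tf 1 (m+1) = Tf 1 (m) + Tf 0 (m) := step_succ 0 (m)
  have h2_0 : Tf 2 (m+1) = Tf 2 (m) + Tf 1 (m) := step_succ 1 (m)
  have h3_0 : Tf 3 (m+1) = Tf 3 (m) + Tf 2 (m) := step_succ 2 (m)
  have h4_0 : Tf 4 (m+1) = Tf 4 (m) + Tf 3 (m) := step_succ 3 (m)
  have h0_1 : Tf 0 (m+2) = Tf 0 (m+1) - Tf 4 (m+1) := step_zero (m+1)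
  have h1_1 : Tf 1 (m+2) = Tf 1 (m+1) + Tf 0 (m+1) := step_succ 0 (m+1)
  have h2_1 : Tf 2 (m+2) = Tf 2 (m+1) + Tf 1 (m+1) := step_succ 1 (m+1)
  have h3_1 : Tf 3 (m+2) = Tf 3 (m+1) + Tf 2 (m+1) := step_succ 2 (m+1)
  have h4_1 : Tf 4 (m+2) = Tf 4 (m+1) + Tf 3 (m+1) := step_succ 3 (m+1)
  have h0_2 : Tf 0 (m+3) = Tf 0 (m+2) - Tf 4 (m+2) := step_zero (m+2)
  have h1_2 : Tf 1 (m+3) = Tf 1 (m+2) + Tf 0 (m+2) := step_succ 0 (m+2)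
  have h2_2 : Tf 2 (m+3) = Tf 2 (m+2) + Tf 1 (m+2) := step_succ 1 (m+2)
  have h3_2 : Tf 3 (m+3) = Tf 3 (m+2) + Tf 2 (m+2) := step_succ 2 (m+2)
  have h4_2 : Tf 4 (m+3) = Tf 4 (m+2) + Tf 3 (m+2) := step_succ 3 (m+2)
  have h0_3 : Tf 0 (m+4) = Tf 0 (m+3) - Tf 4 (m+3) := step_zero (m+3)
  have h1_3 : Tf 1 (m+4) = Tf 1 (m+3) + Tf 0 (m+3) := step_succ 0 (m+3)
  have h2_3 : Tf 2 (m+4) = Tf 2 (m+3) + Tf 1 (m+3) := step_succ 1 (m+3)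
  have h3_3 : Tf 3 (m+4) = Tf 3 (m+3) + Tf 2 (m+3) := step_succ 2 (m+3)
  have h4_3 : Tf 4 (m+4) = Tf 4 (m+3) + Tf 3 (m+3) := step_succ 3 (m+3)
  have h0_4 : Tf 0 (m+5) = Tf 0 (m+4) - Tf 4 (m+4) := step_zero (m+4)
  have h1_4 : Tf 1 (m+5) = Tf 1 (m+4) + Tf 0 (m+4) := step_succ 0 (m+4)
  have h2_4 : Tf 2 (m+5) = Tf 2 (m+4) + Tf 1 (m+4) := step_succ 1 (m+4)
  have h3_4 : Tf 3 (m+5) = Tf 3 (m+4) + Tf 2 (m+4) := step_succ 2 (m+4)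
  have h4_4 : Tf 4 (m+5) = Tf 4 (m+4) + Tf 3 (m+4) := step_succ 3 (m+4)
  linarith

lemma rel (m : ℕ) : Tf 0 (m+21) = -625 * Tf 0 (m+11) - 3125 * Tf 0 (m+1) := by
  have g0 : Tf 0 (m+5) = 5*Tf 0 (m+4) - 10*Tf 0 (m+3) + 10*Tf 0 (m+2) - 5*Tf 0 (m+1) := quintic (m)
  have g1 : Tf 0 (m+6) = 5*Tf 0 (m+5) - 10*Tf 0 (m+4) + 10*Tf 0 (m+3) - 5*Tf 0 (m+2) := quintic (m+1)
  have g2 : Tf 0 (m+7) = 5*Tf 0 (m+6) - 10*Tf 0 (m+5) + 10*Tf 0 (m+4) - 5*Tf 0 (m+3) := quintic (m+2)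
  have g3 : Tf 0 (m+8) = 5*Tf 0 (m+7) - 10*Tf 0 (m+6) + 10*Tf 0 (m+5) - 5*Tf 0 (m+4) := quintic (m+3)
  have g4 : Tf 0 (m+9) = 5*Tf 0 (m+8) - 10*Tf 0 (m+7) + 10*Tf 0 (m+6) - 5*Tf 0 (m+5) := quintic (m+4)
  have g5 : Tf 0 (m+10) = 5*Tf 0 (m+9) - 10*Tf 0 (m+8) + 10*Tf 0 (m+7) - 5*Tf 0 (m+6) := quintic (m+5)
  have g6 : Tf 0 (m+11) = 5*Tf 0 (m+10) - 10*Tf 0 (m+9) + 10*Tf 0 (m+8) - 5*Tf 0 (m+7) := quintic (m+6)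
  have g8 : Tf 0 (m+13) = 5*Tf 0 (m+12) - 10*Tf 0 (m+11) + 10*Tf 0 (m+10) - 5*Tf 0 (m+9) := quintic (m+8)
  have g9 : Tf 0 (m+14) = 5*Tf 0 (m+13) - 10*Tf 0 (m+12) + 10*Tf 0 (m+11) - 5*Tf 0 (m+10) := quintic (m+9)
  have g10 : Tf 0 (m+15) = 5*Tf 0 (m+14) - 10*Tf 0 (m+13) + 10*Tf 0 (m+12) - 5*Tf 0 (m+11) := quintic (m+10)
  have g11 : Tf 0 (m+16) = 5*Tf 0 (m+15) - 10*Tf 0 (m+14) + 10*Tf 0 (m+13) - 5*Tf 0 (m+12) := quintic (m+11)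
  have g12 : Tf 0 (m+17) = 5*Tf 0 (m+16) - 10*Tf 0 (m+15) + 10*Tf 0 (m+14) - 5*Tf 0 (m+13) := quintic (m+12)
  have g13 : Tf 0 (m+18) = 5*Tf 0 (m+17) - 10*Tf 0 (m+16) + 10*Tf 0 (m+15) - 5*Tf 0 (m+14) := quintic (m+13)
  have g14 : Tf 0 (m+19) = 5*Tf 0 (m+18) - 10*Tf 0 (m+17) + 10*Tf 0 (m+16) - 5*Tf 0 (m+15) := quintic (m+14)
  have g15 : Tf 0 (m+20) = 5*Tf 0 (m+19) - 10*Tf 0 (m+18) + 10*Tf 0 (m+17) - 5*Tf 0 (m+16) := quintic (m+15)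
  have g16 : Tf 0 (m+21) = 5*Tf 0 (m+20) - 10*Tf 0 (m+19) + 10*Tf 0 (m+18) - 5*Tf 0 (m+17) := quintic (m+16)
  linarith

lemma sval1 : Tf 0 1 = 1 := by
  unfold Tf
  simp [Finset.sum_range_succ]
  decide

lemma sval2 : Tf 0 2 = 1 := by
  unfold Tf
  simp [Finset.sum_range_succ]
  decide

lemma sval3 : Tf 0 3 = 1 := by
  unfold Tf
  simp [Finset.sum_range_succ]
  decide

lemma sval4 : Tf 0 4 = 1 := by
  unfold Tf
  simp [Finset.sum_range_succ]
  decide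

lemma sval5 : Tf 0 5 = 0 := by
  unfold Tf
  simp [Finset.sum_range_succ]
  decide

lemma sval6 : Tf 0 6 = -5 := by
  have h : Tf 0 6 = 5*Tf 0 5 - 10*Tf 0 4 + 10*Tf 0 3 - 5*Tf 0 2 := quintic 1
  rw [sval5, sval4, sval3, sval2] at h
  linarith

lemma sval7 : Tf 0 7 = -20 := by
  have h : Tf 0 7 = 5*Tf 0 6 - 10*Tf 0 5 + 10*Tf 0 4 - 5*Tf 0 3 := quintic 2
  rw [sval6, sval5, sval4, sval3] at h
  linarith

lemma sval8 : Tf 0 8 = -55 := by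
  have h : Tf 0 8 = 5*Tf 0 7 - 10*Tf 0 6 + 10*Tf 0 5 - 5*Tf 0 4 := quintic 3
  rw [sval7, sval6, sval5, sval4] at h
  linarith

lemma sval9 : Tf 0 9 = -125 := by
  have h : Tf 0 9 = 5*Tf 0 8 - 10*Tf 0 7 + 10*Tf 0 6 - 5*Tf 0 5 := quintic 4
  rw [sval8, sval7, sval6, sval5] at h
  linarith

lemma sval10 : Tf 0 10 = -250 := by
  have h : Tf 0 10 = 5*Tf 0 9 - 10*Tf 0 8 + 10*Tf 0 7 - 5*Tf 0 6 := quintic 5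
  rw [sval9, sval8, sval7, sval6] at h
  linarith

lemma sval11 : Tf 0 11 = -450 := by
  have h : Tf 0 11 = 5*Tf 0 10 - 10*Tf 0 9 + 10*Tf 0 8 - 5*Tf 0 7 := quintic 6
  rw [sval10, sval9, sval8, sval7] at h
  linarith

lemma sval12 : Tf 0 12 = -725 := by
  have h : Tf 0 12 = 5*Tf 0 11 - 10*Tf 0 10 + 10*Tf 0 9 - 5*Tf 0 8 := quintic 7
  rw [sval11, sval10, sval9, sval8] at h
  linarith

lemma sval13 : Tf 0 13 = -1000 := by
  have h : Tf 0 13 = 5*Tf 0 12 - 10*Tf 0 11 + 10*Tf 0 10 - 5*Tf 0 9 := quintic 8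
  rw [sval12, sval11, sval10, sval9] at h
  linarith

lemma sval14 : Tf 0 14 = -1000 := by
  have h : Tf 0 14 = 5*Tf 0 13 - 10*Tf 0 12 + 10*Tf 0 11 - 5*Tf 0 10 := quintic 9
  rw [sval13, sval12, sval11, sval10] at h
  linarith

lemma sval15 : Tf 0 15 = 0 := by
  have h : Tf 0 15 = 5*Tf 0 14 - 10*Tf 0 13 + 10*Tf 0 12 - 5*Tf 0 11 := quintic 10
  rw [sval14, sval13, sval12, sval11] at h
  linarith

lemma sval16 : Tf 0 16 = 3625 := by
  have h : Tf 0 16 = 5*Tf 0 15 - 10*Tf 0 14 + 10*Tf 0 13 - 5*Tf 0 12 := quintic 11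
  rw [sval15, sval14, sval13, sval12] at h
  linarith

lemma sval17 : Tf 0 17 = 13125 := by
  have h : Tf 0 17 = 5*Tf 0 16 - 10*Tf 0 15 + 10*Tf 0 14 - 5*Tf 0 13 := quintic 12
  rw [sval16, sval15, sval14, sval13] at h
  linarith

lemma sval18 : Tf 0 18 = 34375 := by
  have h : Tf 0 18 = 5*Tf 0 17 - 10*Tf 0 16 + 10*Tf 0 15 - 5*Tf 0 14 := quintic 13
  rw [sval17, sval16, sval15, sval14] at h
  linarith

lemma sval19 : Tf 0 19 = 76875 := by
  have h : Tf 0 19 = 5*Tf 0 18 - 10*Tf 0 17 + 10*Tf 0 16 - 5*Tf 0 15 := quintic 14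
  rw [sval18, sval17, sval16, sval15] at h
  linarith

lemma sval20 : Tf 0 20 = 153750 := by
  have h : Tf 0 20 = 5*Tf 0 19 - 10*Tf 0 18 + 10*Tf 0 17 - 5*Tf 0 16 := quintic 15
  rw [sval19, sval18, sval17, sval16] at h
  linarith

def eps (m : ℕ) : ℤ := (-1)^((m+5)/10)

lemma eps_add10 (n : ℕ) : eps (n+10) = -eps n := by
  unfold eps
  rw [show (n+10+5)/10 = (n+5)/10 + 1 from by omega, pow_succ]
  ring

lemma zlem : ∀ k, Tf 0 (10*k+5) = 0 := by
  intro k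
  induction k using Nat.strong_induction_on with
  | _ k ih =>
    match k with
    | 0 => exact sval5
    | 1 => exact sval15
    | (j+2) =>
      have h1 := ih j (by omega)
      have h2 := ih (j+1) (by omega)
      have h3 : Tf 0 ((10*j+4)+21) = -625 * Tf 0 ((10*j+4)+11) - 3125 * Tf 0 ((10*j+4)+1) := rel (10*j+4)
      have e1 : (10*j+4)+21 = 10*(j+2)+5 := by ring
      have e2 : (10*j+4)+11 = 10*(j+1)+5 := by ring
      have e3 : (10*j+4)+1 = 10*j+5 := by ring
      rw [e1, e2, e3, h1, h2] at h3
      simpa using h3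

lemma stepP (n : ℕ) (hn : 1 ≤ n)
    (h1 : 0 < eps n * Tf 0 n)
    (h2 : 6 * (eps n * Tf 0 n) ≤ eps (n+10) * Tf 0 (n+10)) :
    0 < eps (n+10) * Tf 0 (n+10) ∧
      6 * (eps (n+10) * Tf 0 (n+10)) ≤ eps (n+20) * Tf 0 (n+20) := by
  constructor
  · linarith
  · obtain ⟨j, rfl⟩ : ∃ j, n = j + 1 := ⟨n-1, by omega⟩
    have hrel : Tf 0 (j+21) = -625 * Tf 0 (j+11) - 3125 * Tf 0 (j+1) := rel j
    have e1 : eps (j+1+20) = eps (j+1) := by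
      rw [show j+1+20 = (j+1+10)+10 from by ring, eps_add10, eps_add10]; ring
    have e2 : eps (j+1+10) = -eps (j+1) := eps_add10 (j+1)
    have e3 : (j+1+20) = j+21 := by ring
    have e4 : (j+1+10) = j+11 := by ring
    rw [e3, e4] at *
    rw [e1, hrel]
    rw [e2] at h2 ⊢
    nlinarith [h1, h2]

lemma keyP : ∀ m, 1 ≤ m → m % 10 ≠ 5 →
    0 < eps m * Tf 0 m ∧ 6 * (eps m * Tf 0 m) ≤ eps (m+10) * Tf 0 (m+10) := by
  intro m
  induction m using Nat.strong_induction_on with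
  | _ m ih =>
    intro hm hm5
    by_cases hle : m ≤ 10
    · interval_cases m <;>
        simp_all [eps, sval1, sval2, sval3, sval4, sval6, sval7, sval8, sval9, sval10,
          sval11, sval12, sval13, sval14, sval16, sval17, sval18, sval19, sval20]
    · obtain ⟨n, rfl⟩ : ∃ n, m = n + 10 := ⟨m-10, by omega⟩
      have hn1 : 1 ≤ n := by omega
      have hn5 : n % 10 ≠ 5 := by omega
      obtain ⟨p1, p2⟩ := ih n (by omega) hn1 hn5
      exact stepP n hn1 p1 p2

theorem K1_order5_zeros (m : ℕ) (hm : 1 ≤ m) :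
    (∑ t ∈ Finset.range (m + 1), (-1 : ℤ) ^ t * (Nat.choose m (5 * t) : ℤ)) = 0 ↔
      m % 10 = 5 := by
  have hS : (∑ t ∈ Finset.range (m + 1), (-1 : ℤ) ^ t * (Nat.choose m (5 * t) : ℤ)) = Tf 0 m := by
    unfold Tf; simp
  rw [hS]
  constructor
  · intro h0
    by_contra h5
    obtain ⟨p1, _⟩ := keyP m hm h5
    rw [h0] at p1
    simp at p1
  · intro h5
    obtain ⟨k, rfl⟩ : ∃ k, m = 10*k+5 := ⟨m/10, by omega⟩
    exact zlem k
end

section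
/- For m ≥ 1, the alternating sum ∑_{t≥0} (-1)^t C(m, 5t+4) equals 0 if and only if m = 1, m = 2, or m ≡ 3 (mod 10). -/
open Finset

def F (j m : ℕ) : ℤ := ∑ t ∈ Finset.range (m + 1), (-1 : ℤ) ^ t * (Nat.choose m (5 * t + j) : ℤ)

lemma F_ext (j m n : ℕ) (h : m + 1 ≤ n) :
    (∑ t ∈ Finset.range n, (-1 : ℤ) ^ t * (Nat.choose m (5 * t + j) : ℤ)) = F j m := by
  unfold F
  symm
  apply Finset.sum_subset (Finset.range_subset_range.2 h)
  intro t _ ht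
  simp only [Finset.mem_range, not_lt] at ht
  have : Nat.choose m (5 * t + j) = 0 := Nat.choose_eq_zero_of_lt (by omega)
  simp [this]

lemma F_succ (i m : ℕ) : F (i + 1) (m + 1) = F (i + 1) m + F i m := by
  have h1 : F (i + 1) (m + 1) = ∑ t ∈ Finset.range (m + 2),
      ((-1 : ℤ) ^ t * (Nat.choose m (5 * t + i) : ℤ) +
       (-1 : ℤ) ^ t * (Nat.choose m (5 * t + (i + 1)) : ℤ)) := by
    unfold F
    apply Finset.sum_congr rfl
    intro t _
    have e : 5 * t + (i + 1) = (5 * t + i) + 1 := by omega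
    rw [e, Nat.choose_succ_succ]
    push_cast
    ring
  rw [h1, Finset.sum_add_distrib, F_ext i m (m + 2) (by omega), F_ext (i + 1) m (m + 2) (by omega)]
  ring

lemma F0_succ (m : ℕ) : F 0 (m + 1) = F 0 m - F 4 m := by
  have hsplit : F 0 (m + 1) = (∑ s ∈ Finset.range (m + 1),
      (-((-1 : ℤ) ^ s * (Nat.choose m (5 * s + 4) : ℤ)) +
       -((-1 : ℤ) ^ s * (Nat.choose m (5 * (s + 1)) : ℤ)))) + 1 := by
    show (∑ t ∈ Finset.range (m + 1 + 1), (-1 : ℤ) ^ t * (Nat.choose (m + 1) (5 * t + 0) : ℤ)) = _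
    rw [Finset.sum_range_succ']
    congr 1
    · apply Finset.sum_congr rfl
      intro s _
      have e : 5 * (s + 1) + 0 = (5 * s + 4) + 1 := by omega
      rw [e, Nat.choose_succ_succ, Nat.succ_eq_add_one]
      have e2 : (5 * s + 4) + 1 = 5 * (s + 1) := by omega
      rw [e2]
      push_cast
      ring
  have hG : F 0 m + (∑ s ∈ Finset.range (m + 1), (-1 : ℤ) ^ s * (Nat.choose m (5 * (s + 1)) : ℤ)) = 1 := by
    unfold F
    rw [Finset.sum_range_succ' (fun t => (-1 : ℤ) ^ t * (Nat.choose m (5 * t + 0) : ℤ)) m,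
      Finset.sum_range_succ]
    have hz : (Nat.choose m (5 * (m + 1)) : ℤ) = 0 := by
      rw [Nat.choose_eq_zero_of_lt (by omega)]
      norm_num
    rw [hz, mul_zero, add_zero]
    have hcomb : (∑ s ∈ Finset.range m, (-1 : ℤ) ^ (s + 1) * (Nat.choose m (5 * (s + 1) + 0) : ℤ))
        = -(∑ s ∈ Finset.range m, (-1 : ℤ) ^ s * (Nat.choose m (5 * (s + 1)) : ℤ)) := by
      rw [← Finset.sum_neg_distrib]
      apply Finset.sum_congr rfl
      intro s _
      ring_nf
    rw [hcomb]
    simp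
  rw [hsplit, Finset.sum_add_distrib, Finset.sum_neg_distrib, Finset.sum_neg_distrib,
    F_ext 4 m (m + 1) (by omega)]
  linarith [hG]
lemma E1_0 (m : ℕ) : F 0 (m + 1) = (1) * F 0 m + (0) * F 1 m + (0) * F 2 m + (0) * F 3 m + (-1) * F 4 m := by rw [F0_succ]; ring

lemma FS1 (m : ℕ) : F 1 (m + 1) = F 1 m + F 0 m := F_succ 0 m

lemma E1_1 (m : ℕ) : F 1 (m + 1) = (1) * F 0 m + (1) * F 1 m + (0) * F 2 m + (0) * F 3 m + (0) * F 4 m := by rw [FS1]; ring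

lemma FS2 (m : ℕ) : F 2 (m + 1) = F 2 m + F 1 m := F_succ 1 m

lemma E1_2 (m : ℕ) : F 2 (m + 1) = (0) * F 0 m + (1) * F 1 m + (1) * F 2 m + (0) * F 3 m + (0) * F 4 m := by rw [FS2]; ring

lemma FS3 (m : ℕ) : F 3 (m + 1) = F 3 m + F 2 m := F_succ 2 m

lemma E1_3 (m : ℕ) : F 3 (m + 1) = (0) * F 0 m + (0) * F 1 m + (1) * F 2 m + (1) * F 3 m + (0) * F 4 m := by rw [FS3]; ring

lemma FS4 (m : ℕ) : F 4 (m + 1) = F 4 m + F 3 m := F_succ 3 m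

lemma E1_4 (m : ℕ) : F 4 (m + 1) = (0) * F 0 m + (0) * F 1 m + (0) * F 2 m + (1) * F 3 m + (1) * F 4 m := by rw [FS4]; ring

lemma E2_0 (m : ℕ) : F 0 (m + 2) = (1) * F 0 m + (0) * F 1 m + (0) * F 2 m + (-1) * F 3 m + (-2) * F 4 m := by
  rw [show m + 2 = (m + 1) + 1 from rfl, F0_succ, E1_0, E1_4]; ring

lemma E2_1 (m : ℕ) : F 1 (m + 2) = (2) * F 0 m + (1) * F 1 m + (0) * F 2 m + (0) * F 3 m + (-1) * F 4 m := by
  rw [show m + 2 = (m + 1) + 1 from rfl, FS1, E1_1, E1_0]; ring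

lemma E2_2 (m : ℕ) : F 2 (m + 2) = (1) * F 0 m + (2) * F 1 m + (1) * F 2 m + (0) * F 3 m + (0) * F 4 m := by
  rw [show m + 2 = (m + 1) + 1 from rfl, FS2, E1_2, E1_1]; ring

lemma E2_3 (m : ℕ) : F 3 (m + 2) = (0) * F 0 m + (1) * F 1 m + (2) * F 2 m + (1) * F 3 m + (0) * F 4 m := by
  rw [show m + 2 = (m + 1) + 1 from rfl, FS3, E1_3, E1_2]; ring

lemma E2_4 (m : ℕ) : F 4 (m + 2) = (0) * F 0 m + (0) * F 1 m + (1) * F 2 m + (2) * F 3 m + (1) * F 4 m := by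
  rw [show m + 2 = (m + 1) + 1 from rfl, FS4, E1_4, E1_3]; ring

lemma E3_0 (m : ℕ) : F 0 (m + 3) = (1) * F 0 m + (0) * F 1 m + (-1) * F 2 m + (-3) * F 3 m + (-3) * F 4 m := by
  rw [show m + 3 = (m + 2) + 1 from rfl, F0_succ, E2_0, E2_4]; ring

lemma E3_1 (m : ℕ) : F 1 (m + 3) = (3) * F 0 m + (1) * F 1 m + (0) * F 2 m + (-1) * F 3 m + (-3) * F 4 m := by
  rw [show m + 3 = (m + 2) + 1 from rfl, FS1, E2_1, E2_0]; ring

lemma E3_2 (m : ℕ) : F 2 (m + 3) = (3) * F 0 m + (3) * F 1 m + (1) * F 2 m + (0) * F 3 m + (-1) * F 4 m := by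
  rw [show m + 3 = (m + 2) + 1 from rfl, FS2, E2_2, E2_1]; ring

lemma E3_3 (m : ℕ) : F 3 (m + 3) = (1) * F 0 m + (3) * F 1 m + (3) * F 2 m + (1) * F 3 m + (0) * F 4 m := by
  rw [show m + 3 = (m + 2) + 1 from rfl, FS3, E2_3, E2_2]; ring

lemma E3_4 (m : ℕ) : F 4 (m + 3) = (0) * F 0 m + (1) * F 1 m + (3) * F 2 m + (3) * F 3 m + (1) * F 4 m := by
  rw [show m + 3 = (m + 2) + 1 from rfl, FS4, E2_4, E2_3]; ring

lemma E4_0 (m : ℕ) : F 0 (m + 4) = (1) * F 0 m + (-1) * F 1 m + (-4) * F 2 m + (-6) * F 3 m + (-4) * F 4 m := by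
  rw [show m + 4 = (m + 3) + 1 from rfl, F0_succ, E3_0, E3_4]; ring

lemma E4_1 (m : ℕ) : F 1 (m + 4) = (4) * F 0 m + (1) * F 1 m + (-1) * F 2 m + (-4) * F 3 m + (-6) * F 4 m := by
  rw [show m + 4 = (m + 3) + 1 from rfl, FS1, E3_1, E3_0]; ring

lemma E4_2 (m : ℕ) : F 2 (m + 4) = (6) * F 0 m + (4) * F 1 m + (1) * F 2 m + (-1) * F 3 m + (-4) * F 4 m := by
  rw [show m + 4 = (m + 3) + 1 from rfl, FS2, E3_2, E3_1]; ring

lemma E4_3 (m : ℕ) : F 3 (m + 4) = (4) * F 0 m + (6) * F 1 m + (4) * F 2 m + (1) * F 3 m + (-1) * F 4 m := by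
  rw [show m + 4 = (m + 3) + 1 from rfl, FS3, E3_3, E3_2]; ring

lemma E4_4 (m : ℕ) : F 4 (m + 4) = (1) * F 0 m + (4) * F 1 m + (6) * F 2 m + (4) * F 3 m + (1) * F 4 m := by
  rw [show m + 4 = (m + 3) + 1 from rfl, FS4, E3_4, E3_3]; ring

lemma E5_0 (m : ℕ) : F 0 (m + 5) = (0) * F 0 m + (-5) * F 1 m + (-10) * F 2 m + (-10) * F 3 m + (-5) * F 4 m := by
  rw [show m + 5 = (m + 4) + 1 from rfl, F0_succ, E4_0, E4_4]; ring

lemma E5_1 (m : ℕ) : F 1 (m + 5) = (5) * F 0 m + (0) * F 1 m + (-5) * F 2 m + (-10) * F 3 m + (-10) * F 4 m := by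
  rw [show m + 5 = (m + 4) + 1 from rfl, FS1, E4_1, E4_0]; ring

lemma E5_2 (m : ℕ) : F 2 (m + 5) = (10) * F 0 m + (5) * F 1 m + (0) * F 2 m + (-5) * F 3 m + (-10) * F 4 m := by
  rw [show m + 5 = (m + 4) + 1 from rfl, FS2, E4_2, E4_1]; ring

lemma E5_3 (m : ℕ) : F 3 (m + 5) = (10) * F 0 m + (10) * F 1 m + (5) * F 2 m + (0) * F 3 m + (-5) * F 4 m := by
  rw [show m + 5 = (m + 4) + 1 from rfl, FS3, E4_3, E4_2]; ring

lemma E5_4 (m : ℕ) : F 4 (m + 5) = (5) * F 0 m + (10) * F 1 m + (10) * F 2 m + (5) * F 3 m + (0) * F 4 m := by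
  rw [show m + 5 = (m + 4) + 1 from rfl, FS4, E4_4, E4_3]; ring

lemma E6_0 (m : ℕ) : F 0 (m + 6) = (-5) * F 0 m + (-15) * F 1 m + (-20) * F 2 m + (-15) * F 3 m + (-5) * F 4 m := by
  rw [show m + 6 = (m + 5) + 1 from rfl, F0_succ, E5_0, E5_4]; ring

lemma E6_1 (m : ℕ) : F 1 (m + 6) = (5) * F 0 m + (-5) * F 1 m + (-15) * F 2 m + (-20) * F 3 m + (-15) * F 4 m := by
  rw [show m + 6 = (m + 5) + 1 from rfl, FS1, E5_1, E5_0]; ring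

lemma E6_2 (m : ℕ) : F 2 (m + 6) = (15) * F 0 m + (5) * F 1 m + (-5) * F 2 m + (-15) * F 3 m + (-20) * F 4 m := by
  rw [show m + 6 = (m + 5) + 1 from rfl, FS2, E5_2, E5_1]; ring

lemma E6_3 (m : ℕ) : F 3 (m + 6) = (20) * F 0 m + (15) * F 1 m + (5) * F 2 m + (-5) * F 3 m + (-15) * F 4 m := by
  rw [show m + 6 = (m + 5) + 1 from rfl, FS3, E5_3, E5_2]; ring

lemma E6_4 (m : ℕ) : F 4 (m + 6) = (15) * F 0 m + (20) * F 1 m + (15) * F 2 m + (5) * F 3 m + (-5) * F 4 m := by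
  rw [show m + 6 = (m + 5) + 1 from rfl, FS4, E5_4, E5_3]; ring

lemma E7_0 (m : ℕ) : F 0 (m + 7) = (-20) * F 0 m + (-35) * F 1 m + (-35) * F 2 m + (-20) * F 3 m + (0) * F 4 m := by
  rw [show m + 7 = (m + 6) + 1 from rfl, F0_succ, E6_0, E6_4]; ring

lemma E7_1 (m : ℕ) : F 1 (m + 7) = (0) * F 0 m + (-20) * F 1 m + (-35) * F 2 m + (-35) * F 3 m + (-20) * F 4 m := by
  rw [show m + 7 = (m + 6) + 1 from rfl, FS1, E6_1, E6_0]; ring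

lemma E7_2 (m : ℕ) : F 2 (m + 7) = (20) * F 0 m + (0) * F 1 m + (-20) * F 2 m + (-35) * F 3 m + (-35) * F 4 m := by
  rw [show m + 7 = (m + 6) + 1 from rfl, FS2, E6_2, E6_1]; ring

lemma E7_3 (m : ℕ) : F 3 (m + 7) = (35) * F 0 m + (20) * F 1 m + (0) * F 2 m + (-20) * F 3 m + (-35) * F 4 m := by
  rw [show m + 7 = (m + 6) + 1 from rfl, FS3, E6_3, E6_2]; ring

lemma E7_4 (m : ℕ) : F 4 (m + 7) = (35) * F 0 m + (35) * F 1 m + (20) * F 2 m + (0) * F 3 m + (-20) * F 4 m := by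
  rw [show m + 7 = (m + 6) + 1 from rfl, FS4, E6_4, E6_3]; ring

lemma E8_0 (m : ℕ) : F 0 (m + 8) = (-55) * F 0 m + (-70) * F 1 m + (-55) * F 2 m + (-20) * F 3 m + (20) * F 4 m := by
  rw [show m + 8 = (m + 7) + 1 from rfl, F0_succ, E7_0, E7_4]; ring

lemma E8_1 (m : ℕ) : F 1 (m + 8) = (-20) * F 0 m + (-55) * F 1 m + (-70) * F 2 m + (-55) * F 3 m + (-20) * F 4 m := by
  rw [show m + 8 = (m + 7) + 1 from rfl, FS1, E7_1, E7_0]; ring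

lemma E8_2 (m : ℕ) : F 2 (m + 8) = (20) * F 0 m + (-20) * F 1 m + (-55) * F 2 m + (-70) * F 3 m + (-55) * F 4 m := by
  rw [show m + 8 = (m + 7) + 1 from rfl, FS2, E7_2, E7_1]; ring

lemma E8_3 (m : ℕ) : F 3 (m + 8) = (55) * F 0 m + (20) * F 1 m + (-20) * F 2 m + (-55) * F 3 m + (-70) * F 4 m := by
  rw [show m + 8 = (m + 7) + 1 from rfl, FS3, E7_3, E7_2]; ring

lemma E8_4 (m : ℕ) : F 4 (m + 8) = (70) * F 0 m + (55) * F 1 m + (20) * F 2 m + (-20) * F 3 m + (-55) * F 4 m := by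
  rw [show m + 8 = (m + 7) + 1 from rfl, FS4, E7_4, E7_3]; ring

lemma E9_0 (m : ℕ) : F 0 (m + 9) = (-125) * F 0 m + (-125) * F 1 m + (-75) * F 2 m + (0) * F 3 m + (75) * F 4 m := by
  rw [show m + 9 = (m + 8) + 1 from rfl, F0_succ, E8_0, E8_4]; ring

lemma E9_1 (m : ℕ) : F 1 (m + 9) = (-75) * F 0 m + (-125) * F 1 m + (-125) * F 2 m + (-75) * F 3 m + (0) * F 4 m := by
  rw [show m + 9 = (m + 8) + 1 from rfl, FS1, E8_1, E8_0]; ring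

lemma E9_2 (m : ℕ) : F 2 (m + 9) = (0) * F 0 m + (-75) * F 1 m + (-125) * F 2 m + (-125) * F 3 m + (-75) * F 4 m := by
  rw [show m + 9 = (m + 8) + 1 from rfl, FS2, E8_2, E8_1]; ring

lemma E9_3 (m : ℕ) : F 3 (m + 9) = (75) * F 0 m + (0) * F 1 m + (-75) * F 2 m + (-125) * F 3 m + (-125) * F 4 m := by
  rw [show m + 9 = (m + 8) + 1 from rfl, FS3, E8_3, E8_2]; ring

lemma E9_4 (m : ℕ) : F 4 (m + 9) = (125) * F 0 m + (75) * F 1 m + (0) * F 2 m + (-75) * F 3 m + (-125) * F 4 m := by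
  rw [show m + 9 = (m + 8) + 1 from rfl, FS4, E8_4, E8_3]; ring

lemma E10_0 (m : ℕ) : F 0 (m + 10) = (-250) * F 0 m + (-200) * F 1 m + (-75) * F 2 m + (75) * F 3 m + (200) * F 4 m := by
  rw [show m + 10 = (m + 9) + 1 from rfl, F0_succ, E9_0, E9_4]; ring

lemma E10_1 (m : ℕ) : F 1 (m + 10) = (-200) * F 0 m + (-250) * F 1 m + (-200) * F 2 m + (-75) * F 3 m + (75) * F 4 m := by
  rw [show m + 10 = (m + 9) + 1 from rfl, FS1, E9_1, E9_0]; ring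

lemma E10_2 (m : ℕ) : F 2 (m + 10) = (-75) * F 0 m + (-200) * F 1 m + (-250) * F 2 m + (-200) * F 3 m + (-75) * F 4 m := by
  rw [show m + 10 = (m + 9) + 1 from rfl, FS2, E9_2, E9_1]; ring

lemma E10_3 (m : ℕ) : F 3 (m + 10) = (75) * F 0 m + (-75) * F 1 m + (-200) * F 2 m + (-250) * F 3 m + (-200) * F 4 m := by
  rw [show m + 10 = (m + 9) + 1 from rfl, FS3, E9_3, E9_2]; ring

lemma E10_4 (m : ℕ) : F 4 (m + 10) = (200) * F 0 m + (75) * F 1 m + (-75) * F 2 m + (-200) * F 3 m + (-250) * F 4 m := by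
  rw [show m + 10 = (m + 9) + 1 from rfl, FS4, E9_4, E9_3]; ring

lemma E11_0 (m : ℕ) : F 0 (m + 11) = (-450) * F 0 m + (-275) * F 1 m + (0) * F 2 m + (275) * F 3 m + (450) * F 4 m := by
  rw [show m + 11 = (m + 10) + 1 from rfl, F0_succ, E10_0, E10_4]; ring

lemma E11_1 (m : ℕ) : F 1 (m + 11) = (-450) * F 0 m + (-450) * F 1 m + (-275) * F 2 m + (0) * F 3 m + (275) * F 4 m := by
  rw [show m + 11 = (m + 10) + 1 from rfl, FS1, E10_1, E10_0]; ring

lemma E11_2 (m : ℕ) : F 2 (m + 11) = (-275) * F 0 m + (-450) * F 1 m + (-450) * F 2 m + (-275) * F 3 m + (0) * F 4 m := by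
  rw [show m + 11 = (m + 10) + 1 from rfl, FS2, E10_2, E10_1]; ring

lemma E11_3 (m : ℕ) : F 3 (m + 11) = (0) * F 0 m + (-275) * F 1 m + (-450) * F 2 m + (-450) * F 3 m + (-275) * F 4 m := by
  rw [show m + 11 = (m + 10) + 1 from rfl, FS3, E10_3, E10_2]; ring

lemma E11_4 (m : ℕ) : F 4 (m + 11) = (275) * F 0 m + (0) * F 1 m + (-275) * F 2 m + (-450) * F 3 m + (-450) * F 4 m := by
  rw [show m + 11 = (m + 10) + 1 from rfl, FS4, E10_4, E10_3]; ring

lemma E12_0 (m : ℕ) : F 0 (m + 12) = (-725) * F 0 m + (-275) * F 1 m + (275) * F 2 m + (725) * F 3 m + (900) * F 4 m := by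
  rw [show m + 12 = (m + 11) + 1 from rfl, F0_succ, E11_0, E11_4]; ring

lemma E12_1 (m : ℕ) : F 1 (m + 12) = (-900) * F 0 m + (-725) * F 1 m + (-275) * F 2 m + (275) * F 3 m + (725) * F 4 m := by
  rw [show m + 12 = (m + 11) + 1 from rfl, FS1, E11_1, E11_0]; ring

lemma E12_2 (m : ℕ) : F 2 (m + 12) = (-725) * F 0 m + (-900) * F 1 m + (-725) * F 2 m + (-275) * F 3 m + (275) * F 4 m := by
  rw [show m + 12 = (m + 11) + 1 from rfl, FS2, E11_2, E11_1]; ring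

lemma E12_3 (m : ℕ) : F 3 (m + 12) = (-275) * F 0 m + (-725) * F 1 m + (-900) * F 2 m + (-725) * F 3 m + (-275) * F 4 m := by
  rw [show m + 12 = (m + 11) + 1 from rfl, FS3, E11_3, E11_2]; ring

lemma E12_4 (m : ℕ) : F 4 (m + 12) = (275) * F 0 m + (-275) * F 1 m + (-725) * F 2 m + (-900) * F 3 m + (-725) * F 4 m := by
  rw [show m + 12 = (m + 11) + 1 from rfl, FS4, E11_4, E11_3]; ring

lemma E13_0 (m : ℕ) : F 0 (m + 13) = (-1000) * F 0 m + (0) * F 1 m + (1000) * F 2 m + (1625) * F 3 m + (1625) * F 4 m := by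
  rw [show m + 13 = (m + 12) + 1 from rfl, F0_succ, E12_0, E12_4]; ring

lemma E13_1 (m : ℕ) : F 1 (m + 13) = (-1625) * F 0 m + (-1000) * F 1 m + (0) * F 2 m + (1000) * F 3 m + (1625) * F 4 m := by
  rw [show m + 13 = (m + 12) + 1 from rfl, FS1, E12_1, E12_0]; ring

lemma E13_2 (m : ℕ) : F 2 (m + 13) = (-1625) * F 0 m + (-1625) * F 1 m + (-1000) * F 2 m + (0) * F 3 m + (1000) * F 4 m := by
  rw [show m + 13 = (m + 12) + 1 from rfl, FS2, E12_2, E12_1]; ring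

lemma E13_3 (m : ℕ) : F 3 (m + 13) = (-1000) * F 0 m + (-1625) * F 1 m + (-1625) * F 2 m + (-1000) * F 3 m + (0) * F 4 m := by
  rw [show m + 13 = (m + 12) + 1 from rfl, FS3, E12_3, E12_2]; ring

lemma E13_4 (m : ℕ) : F 4 (m + 13) = (0) * F 0 m + (-1000) * F 1 m + (-1625) * F 2 m + (-1625) * F 3 m + (-1000) * F 4 m := by
  rw [show m + 13 = (m + 12) + 1 from rfl, FS4, E12_4, E12_3]; ring

lemma E14_0 (m : ℕ) : F 0 (m + 14) = (-1000) * F 0 m + (1000) * F 1 m + (2625) * F 2 m + (3250) * F 3 m + (2625) * F 4 m := by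
  rw [show m + 14 = (m + 13) + 1 from rfl, F0_succ, E13_0, E13_4]; ring

lemma E14_1 (m : ℕ) : F 1 (m + 14) = (-2625) * F 0 m + (-1000) * F 1 m + (1000) * F 2 m + (2625) * F 3 m + (3250) * F 4 m := by
  rw [show m + 14 = (m + 13) + 1 from rfl, FS1, E13_1, E13_0]; ring

lemma E14_2 (m : ℕ) : F 2 (m + 14) = (-3250) * F 0 m + (-2625) * F 1 m + (-1000) * F 2 m + (1000) * F 3 m + (2625) * F 4 m := by
  rw [show m + 14 = (m + 13) + 1 from rfl, FS2, E13_2, E13_1]; ring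

lemma E14_3 (m : ℕ) : F 3 (m + 14) = (-2625) * F 0 m + (-3250) * F 1 m + (-2625) * F 2 m + (-1000) * F 3 m + (1000) * F 4 m := by
  rw [show m + 14 = (m + 13) + 1 from rfl, FS3, E13_3, E13_2]; ring

lemma E14_4 (m : ℕ) : F 4 (m + 14) = (-1000) * F 0 m + (-2625) * F 1 m + (-3250) * F 2 m + (-2625) * F 3 m + (-1000) * F 4 m := by
  rw [show m + 14 = (m + 13) + 1 from rfl, FS4, E13_4, E13_3]; ring

lemma E15_0 (m : ℕ) : F 0 (m + 15) = (0) * F 0 m + (3625) * F 1 m + (5875) * F 2 m + (5875) * F 3 m + (3625) * F 4 m := by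
  rw [show m + 15 = (m + 14) + 1 from rfl, F0_succ, E14_0, E14_4]; ring

lemma E15_1 (m : ℕ) : F 1 (m + 15) = (-3625) * F 0 m + (0) * F 1 m + (3625) * F 2 m + (5875) * F 3 m + (5875) * F 4 m := by
  rw [show m + 15 = (m + 14) + 1 from rfl, FS1, E14_1, E14_0]; ring

lemma E15_2 (m : ℕ) : F 2 (m + 15) = (-5875) * F 0 m + (-3625) * F 1 m + (0) * F 2 m + (3625) * F 3 m + (5875) * F 4 m := by
  rw [show m + 15 = (m + 14) + 1 from rfl, FS2, E14_2, E14_1]; ring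

lemma E15_3 (m : ℕ) : F 3 (m + 15) = (-5875) * F 0 m + (-5875) * F 1 m + (-3625) * F 2 m + (0) * F 3 m + (3625) * F 4 m := by
  rw [show m + 15 = (m + 14) + 1 from rfl, FS3, E14_3, E14_2]; ring

lemma E15_4 (m : ℕ) : F 4 (m + 15) = (-3625) * F 0 m + (-5875) * F 1 m + (-5875) * F 2 m + (-3625) * F 3 m + (0) * F 4 m := by
  rw [show m + 15 = (m + 14) + 1 from rfl, FS4, E14_4, E14_3]; ring

lemma E16_0 (m : ℕ) : F 0 (m + 16) = (3625) * F 0 m + (9500) * F 1 m + (11750) * F 2 m + (9500) * F 3 m + (3625) * F 4 m := by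
  rw [show m + 16 = (m + 15) + 1 from rfl, F0_succ, E15_0, E15_4]; ring

lemma E16_1 (m : ℕ) : F 1 (m + 16) = (-3625) * F 0 m + (3625) * F 1 m + (9500) * F 2 m + (11750) * F 3 m + (9500) * F 4 m := by
  rw [show m + 16 = (m + 15) + 1 from rfl, FS1, E15_1, E15_0]; ring

lemma E16_2 (m : ℕ) : F 2 (m + 16) = (-9500) * F 0 m + (-3625) * F 1 m + (3625) * F 2 m + (9500) * F 3 m + (11750) * F 4 m := by
  rw [show m + 16 = (m + 15) + 1 from rfl, FS2, E15_2, E15_1]; ring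

lemma E16_3 (m : ℕ) : F 3 (m + 16) = (-11750) * F 0 m + (-9500) * F 1 m + (-3625) * F 2 m + (3625) * F 3 m + (9500) * F 4 m := by
  rw [show m + 16 = (m + 15) + 1 from rfl, FS3, E15_3, E15_2]; ring

lemma E16_4 (m : ℕ) : F 4 (m + 16) = (-9500) * F 0 m + (-11750) * F 1 m + (-9500) * F 2 m + (-3625) * F 3 m + (3625) * F 4 m := by
  rw [show m + 16 = (m + 15) + 1 from rfl, FS4, E15_4, E15_3]; ring

lemma E17_0 (m : ℕ) : F 0 (m + 17) = (13125) * F 0 m + (21250) * F 1 m + (21250) * F 2 m + (13125) * F 3 m + (0) * F 4 m := by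
  rw [show m + 17 = (m + 16) + 1 from rfl, F0_succ, E16_0, E16_4]; ring

lemma E17_1 (m : ℕ) : F 1 (m + 17) = (0) * F 0 m + (13125) * F 1 m + (21250) * F 2 m + (21250) * F 3 m + (13125) * F 4 m := by
  rw [show m + 17 = (m + 16) + 1 from rfl, FS1, E16_1, E16_0]; ring

lemma E17_2 (m : ℕ) : F 2 (m + 17) = (-13125) * F 0 m + (0) * F 1 m + (13125) * F 2 m + (21250) * F 3 m + (21250) * F 4 m := by
  rw [show m + 17 = (m + 16) + 1 from rfl, FS2, E16_2, E16_1]; ring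

lemma E17_3 (m : ℕ) : F 3 (m + 17) = (-21250) * F 0 m + (-13125) * F 1 m + (0) * F 2 m + (13125) * F 3 m + (21250) * F 4 m := by
  rw [show m + 17 = (m + 16) + 1 from rfl, FS3, E16_3, E16_2]; ring

lemma E17_4 (m : ℕ) : F 4 (m + 17) = (-21250) * F 0 m + (-21250) * F 1 m + (-13125) * F 2 m + (0) * F 3 m + (13125) * F 4 m := by
  rw [show m + 17 = (m + 16) + 1 from rfl, FS4, E16_4, E16_3]; ring

lemma E18_0 (m : ℕ) : F 0 (m + 18) = (34375) * F 0 m + (42500) * F 1 m + (34375) * F 2 m + (13125) * F 3 m + (-13125) * F 4 m := by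
  rw [show m + 18 = (m + 17) + 1 from rfl, F0_succ, E17_0, E17_4]; ring

lemma E18_1 (m : ℕ) : F 1 (m + 18) = (13125) * F 0 m + (34375) * F 1 m + (42500) * F 2 m + (34375) * F 3 m + (13125) * F 4 m := by
  rw [show m + 18 = (m + 17) + 1 from rfl, FS1, E17_1, E17_0]; ring

lemma E18_2 (m : ℕ) : F 2 (m + 18) = (-13125) * F 0 m + (13125) * F 1 m + (34375) * F 2 m + (42500) * F 3 m + (34375) * F 4 m := by
  rw [show m + 18 = (m + 17) + 1 from rfl, FS2, E17_2, E17_1]; ring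

lemma E18_3 (m : ℕ) : F 3 (m + 18) = (-34375) * F 0 m + (-13125) * F 1 m + (13125) * F 2 m + (34375) * F 3 m + (42500) * F 4 m := by
  rw [show m + 18 = (m + 17) + 1 from rfl, FS3, E17_3, E17_2]; ring

lemma E18_4 (m : ℕ) : F 4 (m + 18) = (-42500) * F 0 m + (-34375) * F 1 m + (-13125) * F 2 m + (13125) * F 3 m + (34375) * F 4 m := by
  rw [show m + 18 = (m + 17) + 1 from rfl, FS4, E17_4, E17_3]; ring

lemma E19_0 (m : ℕ) : F 0 (m + 19) = (76875) * F 0 m + (76875) * F 1 m + (47500) * F 2 m + (0) * F 3 m + (-47500) * F 4 m := by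
  rw [show m + 19 = (m + 18) + 1 from rfl, F0_succ, E18_0, E18_4]; ring

lemma E19_1 (m : ℕ) : F 1 (m + 19) = (47500) * F 0 m + (76875) * F 1 m + (76875) * F 2 m + (47500) * F 3 m + (0) * F 4 m := by
  rw [show m + 19 = (m + 18) + 1 from rfl, FS1, E18_1, E18_0]; ring

lemma E19_2 (m : ℕ) : F 2 (m + 19) = (0) * F 0 m + (47500) * F 1 m + (76875) * F 2 m + (76875) * F 3 m + (47500) * F 4 m := by
  rw [show m + 19 = (m + 18) + 1 from rfl, FS2, E18_2, E18_1]; ring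

lemma E19_3 (m : ℕ) : F 3 (m + 19) = (-47500) * F 0 m + (0) * F 1 m + (47500) * F 2 m + (76875) * F 3 m + (76875) * F 4 m := by
  rw [show m + 19 = (m + 18) + 1 from rfl, FS3, E18_3, E18_2]; ring

lemma E19_4 (m : ℕ) : F 4 (m + 19) = (-76875) * F 0 m + (-47500) * F 1 m + (0) * F 2 m + (47500) * F 3 m + (76875) * F 4 m := by
  rw [show m + 19 = (m + 18) + 1 from rfl, FS4, E18_4, E18_3]; ring

lemma E20_0 (m : ℕ) : F 0 (m + 20) = (153750) * F 0 m + (124375) * F 1 m + (47500) * F 2 m + (-47500) * F 3 m + (-124375) * F 4 m := by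
  rw [show m + 20 = (m + 19) + 1 from rfl, F0_succ, E19_0, E19_4]; ring

lemma E20_1 (m : ℕ) : F 1 (m + 20) = (124375) * F 0 m + (153750) * F 1 m + (124375) * F 2 m + (47500) * F 3 m + (-47500) * F 4 m := by
  rw [show m + 20 = (m + 19) + 1 from rfl, FS1, E19_1, E19_0]; ring

lemma E20_2 (m : ℕ) : F 2 (m + 20) = (47500) * F 0 m + (124375) * F 1 m + (153750) * F 2 m + (124375) * F 3 m + (47500) * F 4 m := by
  rw [show m + 20 = (m + 19) + 1 from rfl, FS2, E19_2, E19_1]; ring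

lemma E20_3 (m : ℕ) : F 3 (m + 20) = (-47500) * F 0 m + (47500) * F 1 m + (124375) * F 2 m + (153750) * F 3 m + (124375) * F 4 m := by
  rw [show m + 20 = (m + 19) + 1 from rfl, FS3, E19_3, E19_2]; ring

lemma E20_4 (m : ℕ) : F 4 (m + 20) = (-124375) * F 0 m + (-47500) * F 1 m + (47500) * F 2 m + (124375) * F 3 m + (153750) * F 4 m := by
  rw [show m + 20 = (m + 19) + 1 from rfl, FS4, E19_4, E19_3]; ring

lemma E21_0 (m : ℕ) : F 0 (m + 21) = (278125) * F 0 m + (171875) * F 1 m + (0) * F 2 m + (-171875) * F 3 m + (-278125) * F 4 m := by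
  rw [show m + 21 = (m + 20) + 1 from rfl, F0_succ, E20_0, E20_4]; ring

lemma E21_1 (m : ℕ) : F 1 (m + 21) = (278125) * F 0 m + (278125) * F 1 m + (171875) * F 2 m + (0) * F 3 m + (-171875) * F 4 m := by
  rw [show m + 21 = (m + 20) + 1 from rfl, FS1, E20_1, E20_0]; ring

lemma E21_2 (m : ℕ) : F 2 (m + 21) = (171875) * F 0 m + (278125) * F 1 m + (278125) * F 2 m + (171875) * F 3 m + (0) * F 4 m := by
  rw [show m + 21 = (m + 20) + 1 from rfl, FS2, E20_2, E20_1]; ring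

lemma E21_3 (m : ℕ) : F 3 (m + 21) = (0) * F 0 m + (171875) * F 1 m + (278125) * F 2 m + (278125) * F 3 m + (171875) * F 4 m := by
  rw [show m + 21 = (m + 20) + 1 from rfl, FS3, E20_3, E20_2]; ring

lemma E21_4 (m : ℕ) : F 4 (m + 21) = (-171875) * F 0 m + (0) * F 1 m + (171875) * F 2 m + (278125) * F 3 m + (278125) * F 4 m := by
  rw [show m + 21 = (m + 20) + 1 from rfl, FS4, E20_4, E20_3]; ring

lemma E22_4 (m : ℕ) : F 4 (m + 22) = (-171875) * F 0 m + (171875) * F 1 m + (450000) * F 2 m + (556250) * F 3 m + (450000) * F 4 m := by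
  rw [show m + 22 = (m + 21) + 1 from rfl, FS4, E21_4, E21_3]; ring


lemma Frec (m : ℕ) : F 4 (m + 21) = -625 * F 4 (m + 11) - 3125 * F 4 (m + 1) := by
  rw [E21_4, E11_4, E1_4]; ring

lemma F0z : F 0 0 = 1 := by simp [F]
lemma F1z : F 1 0 = 0 := by simp [F]
lemma F2z : F 2 0 = 0 := by simp [F]
lemma F3z : F 3 0 = 0 := by simp [F]
lemma F4z : F 4 0 = 0 := by simp [F]


lemma Fval1 : F 4 (1) = (0) := by
  have h := E1_4 0
  simp only [Nat.zero_add] at h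
  rw [h, F0z, F1z, F2z, F3z, F4z]; norm_num

lemma Fval2 : F 4 (2) = (0) := by
  have h := E2_4 0
  simp only [Nat.zero_add] at h
  rw [h, F0z, F1z, F2z, F3z, F4z]; norm_num

lemma Fval3 : F 4 (3) = (0) := by
  have h := E3_4 0
  simp only [Nat.zero_add] at h
  rw [h, F0z, F1z, F2z, F3z, F4z]; norm_num

lemma Fval4 : F 4 (4) = (1) := by
  have h := E4_4 0
  simp only [Nat.zero_add] at h
  rw [h, F0z, F1z, F2z, F3z, F4z]; norm_num

lemma Fval5 : F 4 (5) = (5) := by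
  have h := E5_4 0
  simp only [Nat.zero_add] at h
  rw [h, F0z, F1z, F2z, F3z, F4z]; norm_num

lemma Fval6 : F 4 (6) = (15) := by
  have h := E6_4 0
  simp only [Nat.zero_add] at h
  rw [h, F0z, F1z, F2z, F3z, F4z]; norm_num

lemma Fval7 : F 4 (7) = (35) := by
  have h := E7_4 0
  simp only [Nat.zero_add] at h
  rw [h, F0z, F1z, F2z, F3z, F4z]; norm_num

lemma Fval8 : F 4 (8) = (70) := by
  have h := E8_4 0
  simp only [Nat.zero_add] at h
  rw [h, F0z, F1z, F2z, F3z, F4z]; norm_num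

lemma Fval9 : F 4 (9) = (125) := by
  have h := E9_4 0
  simp only [Nat.zero_add] at h
  rw [h, F0z, F1z, F2z, F3z, F4z]; norm_num

lemma Fval10 : F 4 (10) = (200) := by
  have h := E10_4 0
  simp only [Nat.zero_add] at h
  rw [h, F0z, F1z, F2z, F3z, F4z]; norm_num

lemma Fval11 : F 4 (11) = (275) := by
  have h := E11_4 0
  simp only [Nat.zero_add] at h
  rw [h, F0z, F1z, F2z, F3z, F4z]; norm_num

lemma Fval12 : F 4 (12) = (275) := by
  have h := E12_4 0
  simp only [Nat.zero_add] at h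
  rw [h, F0z, F1z, F2z, F3z, F4z]; norm_num

lemma Fval13 : F 4 (13) = (0) := by
  have h := E13_4 0
  simp only [Nat.zero_add] at h
  rw [h, F0z, F1z, F2z, F3z, F4z]; norm_num

lemma Fval14 : F 4 (14) = (-1000) := by
  have h := E14_4 0
  simp only [Nat.zero_add] at h
  rw [h, F0z, F1z, F2z, F3z, F4z]; norm_num

lemma Fval15 : F 4 (15) = (-3625) := by
  have h := E15_4 0
  simp only [Nat.zero_add] at h
  rw [h, F0z, F1z, F2z, F3z, F4z]; norm_num

lemma Fval16 : F 4 (16) = (-9500) := by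
  have h := E16_4 0
  simp only [Nat.zero_add] at h
  rw [h, F0z, F1z, F2z, F3z, F4z]; norm_num

lemma Fval17 : F 4 (17) = (-21250) := by
  have h := E17_4 0
  simp only [Nat.zero_add] at h
  rw [h, F0z, F1z, F2z, F3z, F4z]; norm_num

lemma Fval18 : F 4 (18) = (-42500) := by
  have h := E18_4 0
  simp only [Nat.zero_add] at h
  rw [h, F0z, F1z, F2z, F3z, F4z]; norm_num

lemma Fval19 : F 4 (19) = (-76875) := by
  have h := E19_4 0
  simp only [Nat.zero_add] at h
  rw [h, F0z, F1z, F2z, F3z, F4z]; norm_num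

lemma Fval20 : F 4 (20) = (-124375) := by
  have h := E20_4 0
  simp only [Nat.zero_add] at h
  rw [h, F0z, F1z, F2z, F3z, F4z]; norm_num

lemma Fval21 : F 4 (21) = (-171875) := by
  have h := E21_4 0
  simp only [Nat.zero_add] at h
  rw [h, F0z, F1z, F2z, F3z, F4z]; norm_num

lemma Fval22 : F 4 (22) = (-171875) := by
  have h := E22_4 0
  simp only [Nat.zero_add] at h
  rw [h, F0z, F1z, F2z, F3z, F4z]; norm_num


lemma Fz : ∀ k, F 4 (3 + 10 * k) = 0 ∧ F 4 (13 + 10 * k) = 0 := by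
  intro k
  induction k with
  | zero => exact ⟨Fval3, Fval13⟩
  | succ n ih =>
    obtain ⟨h1, h2⟩ := ih
    refine ⟨by rw [show 3 + 10 * (n + 1) = 13 + 10 * n by ring]; exact h2, ?_⟩
    have h := Frec (2 + 10 * n)
    rw [show 2 + 10 * n + 21 = 13 + 10 * (n + 1) by ring,
      show 2 + 10 * n + 11 = 13 + 10 * n by ring,
      show 2 + 10 * n + 1 = 3 + 10 * n by ring] at h
    rw [h, h1, h2]; ring

lemma key (m1 : ℕ) (h1 : 1 ≤ F 4 (m1 + 1)) (h2 : 6 * F 4 (m1 + 1) ≤ -F 4 (m1 + 11)) :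
    ∀ k, 1 ≤ (-1 : ℤ) ^ k * F 4 (m1 + 1 + 10 * k) ∧
      6 * ((-1 : ℤ) ^ k * F 4 (m1 + 1 + 10 * k)) ≤ (-1 : ℤ) ^ (k + 1) * F 4 (m1 + 1 + 10 * (k + 1)) := by
  intro k
  induction k with
  | zero =>
    constructor
    · simpa using h1
    · rw [show m1 + 1 + 10 * (0 + 1) = m1 + 11 by ring, show m1 + 1 + 10 * 0 = m1 + 1 by ring]
      norm_num
      linarith
  | succ n ih =>
    obtain ⟨hA, hB⟩ := ih
    have hrec := Frec (m1 + 10 * n)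
    rw [show m1 + 10 * n + 21 = m1 + 1 + 10 * (n + 2) by ring,
      show m1 + 10 * n + 11 = m1 + 1 + 10 * (n + 1) by ring,
      show m1 + 10 * n + 1 = m1 + 1 + 10 * n by ring] at hrec
    have hc : (-1 : ℤ) ^ (n + 2) * F 4 (m1 + 1 + 10 * (n + 2)) =
        625 * ((-1 : ℤ) ^ (n + 1) * F 4 (m1 + 1 + 10 * (n + 1))) -
        3125 * ((-1 : ℤ) ^ n * F 4 (m1 + 1 + 10 * n)) := by
      rw [hrec]; ring
    constructor
    · linarith
    · rw [show n + 1 + 1 = n + 2 from rfl] at *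
      linarith

lemma Fne (m1 : ℕ) (h1 : 1 ≤ F 4 (m1 + 1)) (h2 : 6 * F 4 (m1 + 1) ≤ -F 4 (m1 + 11))
    (k : ℕ) : F 4 (m1 + 1 + 10 * k) ≠ 0 := by
  intro h0
  have h := (key m1 h1 h2 k).1
  rw [h0, mul_zero] at h
  omega

theorem K5_order5_zeros (m : ℕ) (hm : 1 ≤ m) :
    (∑ t ∈ Finset.range (m + 1), (-1 : ℤ) ^ t * (Nat.choose m (5 * t + 4) : ℤ)) = 0 ↔
      (m = 1 ∨ m = 2 ∨ m % 10 = 3) := by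
  have hF : (∑ t ∈ Finset.range (m + 1), (-1 : ℤ) ^ t * (Nat.choose m (5 * t + 4) : ℤ)) = F 4 m := rfl
  rw [hF]
  constructor
  · intro h0
    by_contra hc
    push_neg at hc
    obtain ⟨hne1, hne2, hr⟩ := hc
    have hm4 : 4 ≤ m := by omega
    obtain ⟨m1, k, hm1a, hm1b, heq⟩ : ∃ m1 k, 3 ≤ m1 ∧ m1 ≤ 11 ∧ m = m1 + 1 + 10 * k := by
      rcases Nat.lt_or_ge (m % 10) 3 with h | h
      · exact ⟨m % 10 + 9, m / 10 - 1, by omega, by omega, by omega⟩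
      · exact ⟨m % 10 - 1, m / 10, by omega, by omega, by omega⟩
    subst heq
    interval_cases m1 <;>
      exact Fne _ (by norm_num [Fval4, Fval5, Fval6, Fval7, Fval8, Fval9, Fval10, Fval11, Fval12])
        (by norm_num [Fval4, Fval5, Fval6, Fval7, Fval8, Fval9, Fval10, Fval11, Fval12,
          Fval14, Fval15, Fval16, Fval17, Fval18, Fval19, Fval20, Fval21, Fval22]) k h0
  · intro h
    rcases h with h | h | h
    · subst h; exact Fval1
    · subst h; exact Fval2
    · have hm3 : m = 3 + 10 * (m / 10) := by omega
      rw [hm3]; exact (Fz (m / 10)).1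
end
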